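/- arXiv:2012.15528 — 2 statements merged into one kernel-verified Lean document; each statement's English description precedes it below -/
import Mathlib

section
/- Let (Ψ_p)_{p∈P} be a family of IFS of affine contractions satisfying assumption (T_aff) and such that the similarity dimension satisfies Δ(p) > 1 for every p ∈ [-1,1]. Then the limit set K_p has positive one-dimensional Lebesgue measure for Lebesgue-almost every p ∈ P. -/
open Filter MeasureTheory Set
open scoped Topology ENNReal NNReal

noncomputable section

namespace Paper

abbrev E (n : ℕ) : Type := EuclideanSpace ℝ (Fin n)

def cube (N : ℕ) : Set (E N) := {x | ∀ i, x i ∈ Icc (-1:ℝ) 1}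

def cubeO (d : ℕ) : Set (E d) := {p | ∀ i, p i ∈ Ioo (-1:ℝ) 1}

variable {A : Type}

def consF (a : A) (𝔞 : ℕ → A) : ℕ → A := fun n =>
  match n with
  | 0 => a
  | Nat.succ k => 𝔞 k

def app : List A → (ℕ → A) → ℕ → A
  | [], 𝔞 => 𝔞
  | a :: w, 𝔞 => app w (consF a 𝔞)

def trunc (α : ℕ → A) (n : ℕ) : List A := List.ofFn fun i : Fin n => α i

def cyl (w : List A) : Set (ℕ → A) := {α | ∀ i : Fin w.length, α i = w.get i}

variable {N d : ℕ}

def psi (f : E d → (ℕ → A) → E N → E N) (p : E d) : List A → (ℕ → A) → E N → E N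
  | [], _ => id
  | a :: w, 𝔞 => f p (consF a 𝔞) ∘ psi f p w (consF a 𝔞)

def dentry (g : E N → E N) (x : E N) (i j : Fin N) : ℝ :=
  fderiv ℝ g x (EuclideanSpace.single j (1:ℝ)) i

def lam (hN : 0 < N) (f : E d → (ℕ → A) → E N → E N) (p : E d) (𝔞 : ℕ → A)
    (w : List A) (x : E N) : ℝ :=
  |dentry (psi f p w 𝔞) x ⟨0, hN⟩ ⟨0, hN⟩|

def Lam (hN : 0 < N) (f : E d → (ℕ → A) → E N → E N) (p : E d) (𝔞 : ℕ → A)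
    (w : List A) : ℝ :=
  sSup ((fun x => lam hN f p 𝔞 w x) '' cube N)

def piProj (f : E d → (ℕ → A) → E N → E N) (p : E d) (𝔞 α : ℕ → A) : E N :=
  limUnder atTop fun n => psi f p (trunc α n) 𝔞 0

def Mop (g : E N → E N) : ℝ := sSup ((fun x => ‖fderiv ℝ g x‖) '' cube N)

def pressure [Fintype A] (f : E d → (ℕ → A) → E N → E N) (p : E d) (𝔞 : ℕ → A) (s : ℝ) : ℝ :=
  limUnder atTop fun n : ℕ =>
    (1 / n : ℝ) * Real.log (∑ w : Fin n → A, Mop (psi f p (List.ofFn w) 𝔞) ^ s)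

structure SkewFamily (A : Type) (N d : ℕ) (r : ℕ∞) where
  f : E d → (ℕ → A) → E N → E N
  X' : Set (E N)
  P' : Set (E d)
  X'_open : IsOpen X'
  X_subset : cube N ⊆ X'
  P'_open : IsOpen P'
  P_subset : closure (cubeO d) ⊆ P'
  smooth : ∀ 𝔞 : ℕ → A, ContDiffOn ℝ r (fun q : E d × E N => f q.1 𝔞 q.2) (P' ×ˢ X')
  inj : ∀ 𝔞 : ℕ → A, ∀ p ∈ P', Set.InjOn (f p 𝔞) X'
  into : ∀ 𝔞 : ℕ → A, ∀ p ∈ P', f p 𝔞 '' X' ⊆ cube N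
  holder0 : ∃ C > (0:ℝ), ∃ θ ∈ Set.Ioo (0:ℝ) 1, ∀ p ∈ P', ∀ (𝔞 𝔟 : ℕ → A) (q : ℕ),
      (∀ i < q, 𝔞 i = 𝔟 i) → ∀ x ∈ X', ‖f p 𝔞 x - f p 𝔟 x‖ ≤ C * θ ^ q
  holder1 : ∃ C > (0:ℝ), ∃ θ ∈ Set.Ioo (0:ℝ) 1, ∀ p ∈ P', ∀ (𝔞 𝔟 : ℕ → A) (q : ℕ),
      (∀ i < q, 𝔞 i = 𝔟 i) → ∀ x ∈ X',
      ‖fderiv ℝ (f p 𝔞) x - fderiv ℝ (f p 𝔟) x‖ ≤ C * θ ^ q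
  cont2 : ∀ p ∈ P', ∀ 𝔞 : ℕ → A, ∀ ε > (0:ℝ), ∃ q : ℕ, ∀ 𝔟 : ℕ → A,
      (∀ i < q, 𝔞 i = 𝔟 i) → ∀ x ∈ X',
      ‖iteratedFDeriv ℝ 2 (f p 𝔞) x - iteratedFDeriv ℝ 2 (f p 𝔟) x‖ ≤ ε

def UnipOn (hN : 0 < N) (f : E d → (ℕ → A) → E N → E N)
    (P' : Set (E d)) (X' : Set (E N)) : Prop :=
  ∀ p ∈ P', ∀ 𝔞 : ℕ → A, ∀ x ∈ X',
    (∀ i j : Fin N, (i : ℕ) < (j : ℕ) → dentry (f p 𝔞) x i j = 0) ∧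
    (∀ i j : Fin N, dentry (f p 𝔞) x i i = dentry (f p 𝔞) x j j) ∧
    0 < |dentry (f p 𝔞) x ⟨0, hN⟩ ⟨0, hN⟩| ∧ |dentry (f p 𝔞) x ⟨0, hN⟩ ⟨0, hN⟩| < 1

def GammaBounds (hN : 0 < N) (f : E d → (ℕ → A) → E N → E N) (γ' γ : ℝ) : Prop :=
  0 < γ' ∧ γ' < γ ∧ γ < 1 ∧
  ∀ p ∈ closure (cubeO d), ∀ (𝔞 : ℕ → A) (a : A), ∀ x ∈ cube N,
    γ' < lam hN f p 𝔞 [a] x ∧ lam hN f p 𝔞 [a] x < γ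

structure ParamPerturb {A : Type} {N d : ℕ} {r : ℕ∞} (hN : 0 < N)
    (S : SkewFamily A N d r) (θ : ℝ) (τ : ℕ) where
  g : E τ → E d → (ℕ → A) → E N → E N
  jointSmooth : ∀ 𝔞 : ℕ → A, ContDiffOn ℝ r
      (fun q : E τ × E d × E N => g q.1 q.2.1 𝔞 q.2.2) ((cubeO τ) ×ˢ S.P' ×ˢ S.X')
  smooth : ∀ t ∈ cubeO τ, ∀ 𝔞 : ℕ → A, ContDiffOn ℝ r
      (fun q : E d × E N => g t q.1 𝔞 q.2) (S.P' ×ˢ S.X')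
  inj : ∀ t ∈ cubeO τ, ∀ 𝔞 : ℕ → A, ∀ p ∈ S.P', Set.InjOn (g t p 𝔞) S.X'
  into : ∀ t ∈ cubeO τ, ∀ 𝔞 : ℕ → A, ∀ p ∈ S.P', g t p 𝔞 '' S.X' ⊆ cube N
  close : ∃ θ' < θ, ∀ t ∈ cubeO τ, ∀ (𝔞 : ℕ → A) (k : ℕ), (k : ℕ∞) ≤ r →
      ∀ p ∈ S.P', ∀ x ∈ S.X',
      ‖iteratedFDeriv ℝ k (fun q : E d × E N => S.f q.1 𝔞 q.2 - g t q.1 𝔞 q.2) (p, x)‖ ≤ θ'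
  unip : ∀ t ∈ cubeO τ, UnipOn hN (g t) S.P' S.X'

def TransAssumption {A : Type} {N d : ℕ} {r : ℕ∞} (hN : 0 < N)
    (S : SkewFamily A N d r) : Prop :=
  ∃ C > (0:ℝ),
    (∀ 𝔞 α β : ℕ → A, α 0 ≠ β 0 → ∀ rr > (0:ℝ),
      volume {p ∈ cubeO d | ‖piProj S.f p 𝔞 α - piProj S.f p 𝔞 β‖ < rr}
        ≤ ENNReal.ofReal (C * rr ^ N)) ∧
    ∃ θ₀ > (0:ℝ), ∀ θ : ℝ, 0 < θ → θ ≤ θ₀ → ∀ τ : ℕ, 0 < τ →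
      ∀ Ft : ParamPerturb hN S θ τ, ∀ t ∈ cubeO τ,
      ∀ 𝔞 α β : ℕ → A, α 0 ≠ β 0 → ∀ rr > (0:ℝ),
        volume {p ∈ cubeO d | ‖piProj (Ft.g t) p 𝔞 α - piProj (Ft.g t) p 𝔞 β‖ < rr}
          ≤ ENNReal.ofReal (C * rr ^ N)

def dens {N : ℕ} (ν : Measure (E N)) (x : E N) : ℝ≥0∞ :=
  liminf (fun rr : ℝ => ν (Metric.ball x rr) / volume (Metric.ball (0 : E N) rr)) (𝓝[>] (0:ℝ))

end Paper

namespace IFS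

open Paper

variable {A : Type}

def psiA (c b : ℝ → A → ℝ) (p : ℝ) : List A → ℝ → ℝ
  | [], x => x
  | a :: w, x => c p a * psiA c b p w x + b p a

def piA (c b : ℝ → A → ℝ) (p : ℝ) (α : ℕ → A) : ℝ :=
  limUnder atTop fun n => psiA c b p (Paper.trunc α n) 0

def LamA (c : ℝ → A → ℝ) (p : ℝ) (w : List A) : ℝ := (w.map fun a => |c p a|).prod

def IFSHyp (c b : ℝ → A → ℝ) (U : Set ℝ) : Prop :=
  IsOpen U ∧ Icc (-1:ℝ) 1 ⊆ U ∧
  (∀ a : A, ContinuousOn (fun p => c p a) U) ∧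
  (∀ a : A, ContinuousOn (fun p => b p a) U) ∧
  (∀ p ∈ U, ∀ a : A, ∀ x ∈ Icc (-1:ℝ) 1, c p a * x + b p a ∈ Ioo (-1:ℝ) 1)

def GammaBoundsA (c : ℝ → A → ℝ) (γ' γ : ℝ) : Prop :=
  0 < γ' ∧ γ' < γ ∧ γ < 1 ∧ ∀ p ∈ Icc (-1:ℝ) 1, ∀ a : A, γ' < |c p a| ∧ |c p a| < γ

def TransAff (c b : ℝ → A → ℝ) : Prop :=
  ∃ C > (0:ℝ), ∀ α β : ℕ → A, α 0 ≠ β 0 → ∀ rr > (0:ℝ),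
    volume {p ∈ Ioo (-1:ℝ) 1 | |piA c b p α - piA c b p β| < rr} ≤ ENNReal.ofReal (C * rr)

def densR (ν : MeasureTheory.Measure ℝ) (x : ℝ) : ℝ≥0∞ :=
  liminf (fun rr : ℝ => ν (Ioo (x - rr) (x + rr)) / ENNReal.ofReal (2 * rr)) (𝓝[>] (0:ℝ))

end IFS

namespace IFS

variable {A : Type}

@[simp] lemma psiA_nil (c b : ℝ → A → ℝ) (p : ℝ) (x : ℝ) : psiA c b p [] x = x := rfl

@[simp] lemma psiA_cons (c b : ℝ → A → ℝ) (p : ℝ) (a : A) (w : List A) (x : ℝ) :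
    psiA c b p (a :: w) x = c p a * psiA c b p w x + b p a := rfl

lemma psiA_append (c b : ℝ → A → ℝ) (p : ℝ) (u v : List A) (x : ℝ) :
    psiA c b p (u ++ v) x = psiA c b p u (psiA c b p v x) := by
  induction u with
  | nil => simp
  | cons a u ih => simp [ih]

lemma psiA_sub (c b : ℝ → A → ℝ) (p : ℝ) (w : List A) (x y : ℝ) :
    psiA c b p w x - psiA c b p w y = (w.map (c p)).prod * (x - y) := by
  induction w with
  | nil => simp
  | cons a w ih =>
    simp only [psiA_cons, List.map_cons, List.prod_cons]
    rw [mul_assoc, ← ih]; ring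

lemma abs_prod_map (c b : ℝ → A → ℝ) (p : ℝ) (w : List A) :
    |(w.map (c p)).prod| = LamA c p w := by
  induction w with
  | nil => simp [LamA]
  | cons a w ih => simp only [LamA, List.map_cons, List.prod_cons, abs_mul] at *; rw [ih]

variable {A : Type}

@[simp] lemma trunc_zero (α : ℕ → A) : Paper.trunc α 0 = [] := by simp [Paper.trunc]

lemma trunc_succ' (α : ℕ → A) (n : ℕ) :
    Paper.trunc α (n + 1) = Paper.trunc α n ++ [α n] := by
  simp only [Paper.trunc, List.ofFn_succ']
  simp [List.concat_eq_append]

lemma trunc_consF (a : A) (α : ℕ → A) (n : ℕ) :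
    Paper.trunc (Paper.consF a α) (n + 1) = a :: Paper.trunc α n := by
  simp only [Paper.trunc, List.ofFn_succ]
  rfl

@[simp] lemma trunc_length (α : ℕ → A) (n : ℕ) : (Paper.trunc α n).length = n := by
  simp [Paper.trunc]

section hyp

variable {c b : ℝ → A → ℝ} {U : Set ℝ} {γ' γ : ℝ}
variable (h : IFSHyp c b U) (hγ : GammaBoundsA c γ' γ)

lemma IccU (h : IFSHyp c b U) : Icc (-1:ℝ) 1 ⊆ U := h.2.1

include h in
lemma abs_b_le_one {p : ℝ} (hp : p ∈ U) (a : A) : |b p a| ≤ 1 := by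
  have := h.2.2.2.2 p hp a 0 (by norm_num : (0:ℝ) ∈ Icc (-1:ℝ) 1)
  simp only [mul_zero, zero_add] at this
  rw [abs_le]; constructor <;> [linarith [this.1]; linarith [this.2]]

include h in
lemma psiA_mem {p : ℝ} (hp : p ∈ U) (w : List A) {x : ℝ} (hx : x ∈ Icc (-1:ℝ) 1) :
    psiA c b p w x ∈ Icc (-1:ℝ) 1 := by
  induction w with
  | nil => simpa
  | cons a w ih =>
    have := h.2.2.2.2 p hp a _ ih
    exact ⟨le_of_lt this.1, le_of_lt this.2⟩

include hγ in
lemma LamA_pos {p : ℝ} (hp : p ∈ Icc (-1:ℝ) 1) (w : List A) : 0 < LamA c p w := by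
  induction w with
  | nil => simp [LamA]
  | cons a w ih =>
    simp only [LamA, List.map_cons, List.prod_cons] at *
    exact mul_pos (lt_trans hγ.1 (hγ.2.2.2 p hp a).1) ih

include hγ in
lemma LamA_le {p : ℝ} (hp : p ∈ Icc (-1:ℝ) 1) (w : List A) :
    LamA c p w ≤ γ ^ w.length := by
  induction w with
  | nil => simp [LamA]
  | cons a w ih =>
    simp only [LamA, List.map_cons, List.prod_cons, List.length_cons] at *
    rw [pow_succ, mul_comm (γ ^ w.length) γ]
    exact mul_le_mul (le_of_lt (hγ.2.2.2 p hp a).2) ih (le_of_lt (LamA_pos hγ hp w)) (by linarith [hγ.1, hγ.2.1])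

include h hγ in
lemma psiA_step_dist {p : ℝ} (hp : p ∈ Icc (-1:ℝ) 1) (α : ℕ → A) (n : ℕ) :
    dist (psiA c b p (Paper.trunc α n) 0) (psiA c b p (Paper.trunc α (n+1)) 0) ≤ 1 * γ ^ n := by
  rw [trunc_succ', psiA_append]
  rw [Real.dist_eq, ← neg_sub, abs_neg, psiA_sub, abs_mul, abs_prod_map c b]
  have h1 : |psiA c b p [α n] 0 - 0| ≤ 1 := by
    have := psiA_mem h (IccU h hp) [α n] (by norm_num : (0:ℝ) ∈ Icc (-1:ℝ) 1)
    rw [sub_zero, abs_le]; exact ⟨this.1, this.2⟩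
  calc LamA c p (Paper.trunc α n) * |psiA c b p [α n] 0 - 0|
      ≤ γ ^ n * 1 := by
        have := LamA_le hγ hp (Paper.trunc α n)
        rw [trunc_length] at this
        exact mul_le_mul this h1 (abs_nonneg _) (le_trans (le_of_lt (LamA_pos hγ hp _)) this)
    _ = 1 * γ ^ n := by ring

include h hγ in
lemma tendsto_psiA_piA {p : ℝ} (hp : p ∈ Icc (-1:ℝ) 1) (α : ℕ → A) :
    Tendsto (fun n => psiA c b p (Paper.trunc α n) 0) atTop (𝓝 (piA c b p α)) := by
  have hcs : CauchySeq (fun n => psiA c b p (Paper.trunc α n) 0) :=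
    cauchySeq_of_le_geometric γ 1 hγ.2.2.1 (fun n => psiA_step_dist h hγ hp α n)
  obtain ⟨L, hL⟩ := cauchySeq_tendsto_of_complete hcs
  rw [show piA c b p α = L from hL.limUnder_eq]
  exact hL

include h hγ in
lemma piA_dist (hp : ∀ {p : ℝ}, p ∈ Icc (-1:ℝ) 1 → True) {p : ℝ} (hpI : p ∈ Icc (-1:ℝ) 1)
    (α : ℕ → A) (n : ℕ) :
    dist (psiA c b p (Paper.trunc α n) 0) (piA c b p α) ≤ 1 * γ ^ n / (1 - γ) :=
  dist_le_of_le_geometric_of_tendsto γ 1 hγ.2.2.1 (fun n => psiA_step_dist h hγ hpI α n)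
    (tendsto_psiA_piA h hγ hpI α) n

set_option maxHeartbeats 1000000 in
include h hγ in
lemma piA_mem {p : ℝ} (hp : p ∈ Icc (-1:ℝ) 1) (α : ℕ → A) :
    piA c b p α ∈ Icc (-1:ℝ) 1 := by
  have h0 : (0:ℝ) ∈ Icc (-1:ℝ) 1 := by norm_num
  have hev : ∀ᶠ n in (atTop : Filter ℕ), psiA c b p (Paper.trunc α n) 0 ∈ Icc (-1:ℝ) 1 :=
    Filter.Eventually.of_forall fun n => psiA_mem h (IccU h hp) (Paper.trunc α n) h0
  exact isClosed_Icc.mem_of_tendsto (tendsto_psiA_piA h hγ hp α) hev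

include h hγ in
lemma piA_consF {p : ℝ} (hp : p ∈ Icc (-1:ℝ) 1) (a : A) (α : ℕ → A) :
    piA c b p (Paper.consF a α) = c p a * piA c b p α + b p a := by
  have h1 := tendsto_psiA_piA h hγ hp α
  have h2 : Tendsto (fun n => psiA c b p (Paper.trunc (Paper.consF a α) (n+1)) 0) atTop
      (𝓝 (c p a * piA c b p α + b p a)) := by
    simp only [trunc_consF, psiA_cons]
    exact ((h1.const_mul _).add tendsto_const_nhds)
  have h3 := (tendsto_add_atTop_iff_nat (f := fun m : ℕ => psiA c b p (Paper.trunc (Paper.consF a α) m) 0) 1).mp h2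
  exact tendsto_nhds_unique (tendsto_psiA_piA h hγ hp (Paper.consF a α)) h3

lemma psiA_continuousOn (hco : ∀ a : A, ContinuousOn (fun p => c p a) U)
    (hbo : ∀ a : A, ContinuousOn (fun p => b p a) U) (w : List A) (x : ℝ) :
    ContinuousOn (fun p => psiA c b p w x) U := by
  induction w with
  | nil => simpa using continuousOn_const
  | cons a w ih => exact ((hco a).mul ih).add (hbo a)

include h hγ in
lemma piA_continuousOn (α : ℕ → A) :
    ContinuousOn (fun p => piA c b p α) (Icc (-1:ℝ) 1) := by
  have hγ0 : 0 < γ := lt_trans hγ.1 hγ.2.1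
  apply TendstoUniformlyOn.continuousOn (F := fun n p => psiA c b p (Paper.trunc α n) 0)
    (p := atTop)
  · rw [Metric.tendstoUniformlyOn_iff]
    intro ε hε
    have : Tendsto (fun n : ℕ => 1 * γ ^ n / (1 - γ)) atTop (𝓝 0) := by
      rw [show (0:ℝ) = 1 * 0 / (1-γ) by ring]
      exact ((tendsto_pow_atTop_nhds_zero_of_lt_one (le_of_lt hγ0) hγ.2.2.1).const_mul 1).div_const _
    filter_upwards [this.eventually (eventually_lt_nhds hε)] with n hn p hp
    rw [dist_comm]
    exact lt_of_le_of_lt (piA_dist h hγ (fun _ => trivial) hp α n) hn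
  · exact (Filter.Eventually.of_forall fun n =>
      (psiA_continuousOn h.2.2.1 h.2.2.2.1 _ _).mono (IccU h)).frequently

end hyp

def extSeq : List A → (ℕ → A) → ℕ → A
  | [], f => f
  | a :: w, f => Paper.consF a (extSeq w f)

@[simp] lemma extSeq_nil (f : ℕ → A) : extSeq [] f = f := rfl

@[simp] lemma extSeq_cons (a : A) (w : List A) (f : ℕ → A) :
    extSeq (a :: w) f = Paper.consF a (extSeq w f) := rfl

@[simp] lemma consF_zero (a : A) (f : ℕ → A) : Paper.consF a f 0 = a := rfl

lemma sum_pi_succ {M : Type*} [AddCommMonoid M] [Fintype A] (n : ℕ)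
    (G : (Fin (n+1) → A) → M) :
    ∑ w : Fin (n+1) → A, G w = ∑ a : A, ∑ v : Fin n → A, G (Fin.cons a v) := by
  rw [← (Fin.consEquiv fun _ : Fin (n+1) => A).sum_comp G, Fintype.sum_prod_type]
  rfl

lemma ofFn_cons {n : ℕ} (a : A) (v : Fin n → A) :
    List.ofFn (Fin.cons a v : Fin (n+1) → A) = a :: List.ofFn v := by
  rw [List.ofFn_succ]
  simp

section claimA

variable [Fintype A] {c b : ℝ → A → ℝ} {U : Set ℝ} {γ' γ : ℝ}

lemma sum_QL [Nonempty A] {q : A → ℝ} (hq : ∀ a, 0 ≤ q a) (hq1 : ∑ a, q a = 1) (n : ℕ) :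
    ∑ w : Fin n → A, ENNReal.ofReal ((List.ofFn w).map q).prod = 1 := by
  induction n with
  | zero => simp
  | succ n ih =>
    rw [sum_pi_succ]
    have : ∀ a : A, ∑ v : Fin n → A,
        ENNReal.ofReal ((List.ofFn (Fin.cons a v : Fin (n+1) → A)).map q).prod
        = ENNReal.ofReal (q a) := by
      intro a
      have : ∀ v : Fin n → A,
          ENNReal.ofReal ((List.ofFn (Fin.cons a v : Fin (n+1) → A)).map q).prod
          = ENNReal.ofReal (q a) * ENNReal.ofReal ((List.ofFn v).map q).prod := by
        intro v
        rw [ofFn_cons, List.map_cons, List.prod_cons, ENNReal.ofReal_mul (hq a)]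
      rw [Finset.sum_congr rfl (fun v _ => this v), ← Finset.mul_sum, ih, mul_one]
    rw [Finset.sum_congr rfl (fun a _ => this a), ← ENNReal.ofReal_sum_of_nonneg
      (fun a _ => hq a), hq1, ENNReal.ofReal_one]

end claimA

section sumsplit

variable [Fintype A]

lemma sum_split [Nonempty A] {n : ℕ} [DecidableEq A]
    (g : A → ℝ≥0∞) (f : (Fin n → A) → ℝ≥0∞) (G : (Fin (n+1) → A) → ℝ≥0∞)
    (hG : ∀ a v, G (Fin.cons a v) = g a * f v)
    (V : (Fin (n+1) → A) → (Fin (n+1) → A) → ℝ≥0∞)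
    (V' : A → (Fin n → A) → (Fin n → A) → ℝ≥0∞) (K : ℝ≥0∞)
    (hV : ∀ a a' v v', V (Fin.cons a v) (Fin.cons a' v')
      ≤ (if a' = a then V' a v v' else 0) + K)
    (hg1 : ∑ a, g a = 1) (hf1 : ∑ v, f v = 1) :
    ∑ w : Fin (n+1) → A, ∑ w' : Fin (n+1) → A, G w * G w' * V w w'
      ≤ (∑ a : A, g a * g a * (∑ v : Fin n → A, ∑ v' : Fin n → A,
          f v * f v' * V' a v v')) + K := by
  have hff : ∑ v : Fin n → A, ∑ v' : Fin n → A, f v * f v' = 1 := by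
    rw [← Finset.sum_mul_sum, hf1, one_mul]
  have piece2 : ∀ a a' : A, (∑ v : Fin n → A, ∑ v' : Fin n → A,
      ((g a * f v) * (g a' * f v')) * K) = g a * g a' * K := by
    intro a a'
    have : ∀ v v' : Fin n → A, ((g a * f v) * (g a' * f v')) * K
        = (g a * g a' * K) * (f v * f v') := by intro v v'; ring
    simp_rw [this, ← Finset.mul_sum, hf1, mul_one, hf1, mul_one]
  calc ∑ w : Fin (n+1) → A, ∑ w' : Fin (n+1) → A, G w * G w' * V w w'
      = ∑ a : A, ∑ v : Fin n → A, ∑ a' : A, ∑ v' : Fin n → A,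
          G (Fin.cons a v) * G (Fin.cons a' v') * V (Fin.cons a v) (Fin.cons a' v') := by
        rw [sum_pi_succ (n := n) (G := fun w => ∑ w' : Fin (n+1) → A, G w * G w' * V w w')]
        refine Finset.sum_congr rfl fun a _ => Finset.sum_congr rfl fun v _ => ?_
        exact sum_pi_succ (n := n)
          (G := fun w' => G (Fin.cons a v) * G w' * V (Fin.cons a v) w')
    _ ≤ ∑ a : A, ∑ v : Fin n → A, ∑ a' : A, ∑ v' : Fin n → A,
          (g a * f v) * (g a' * f v') * ((if a' = a then V' a v v' else 0) + K) := by
        refine Finset.sum_le_sum fun a _ => Finset.sum_le_sum fun v _ =>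
          Finset.sum_le_sum fun a' _ => Finset.sum_le_sum fun v' _ => ?_
        rw [hG, hG]
        exact mul_le_mul_right (hV a a' v v') _
    _ = ∑ a : A, ∑ a' : A, ∑ v : Fin n → A, ∑ v' : Fin n → A,
          (g a * f v) * (g a' * f v') * ((if a' = a then V' a v v' else 0) + K) := by
        exact Finset.sum_congr rfl fun a _ => Finset.sum_comm
    _ = ∑ a : A, ∑ a' : A,
          ((if a' = a then g a * g a' * (∑ v : Fin n → A, ∑ v' : Fin n → A,
            f v * f v' * V' a v v') else 0) + g a * g a' * K) := by
        refine Finset.sum_congr rfl fun a _ => Finset.sum_congr rfl fun a' _ => ?_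
        by_cases hd : a' = a
        · subst hd
          simp only [eq_self_iff_true, if_true]
          calc ∑ v : Fin n → A, ∑ v' : Fin n → A,
              (g a' * f v) * (g a' * f v') * (V' a' v v' + K)
              = ∑ v : Fin n → A, ∑ v' : Fin n → A,
                ((g a' * g a') * (f v * f v' * V' a' v v')
                  + ((g a' * f v) * (g a' * f v')) * K) := by
                refine Finset.sum_congr rfl fun v _ =>
                  Finset.sum_congr rfl fun v' _ => by ring
            _ = (∑ v : Fin n → A, ∑ v' : Fin n → A,
                  (g a' * g a') * (f v * f v' * V' a' v v'))
                + ∑ v : Fin n → A, ∑ v' : Fin n → A,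
                  ((g a' * f v) * (g a' * f v')) * K := by
                rw [← Finset.sum_add_distrib]
                exact Finset.sum_congr rfl fun v _ => Finset.sum_add_distrib
            _ = g a' * g a' * (∑ v : Fin n → A, ∑ v' : Fin n → A,
                  f v * f v' * V' a' v v') + g a' * g a' * K := by
                rw [piece2 a' a']
                congr 1
                simp_rw [← Finset.mul_sum]
        · simp only [if_neg hd, zero_add]
          exact piece2 a a'
    _ = (∑ a : A, g a * g a * (∑ v : Fin n → A, ∑ v' : Fin n → A,
          f v * f v' * V' a v v')) + K := by
        simp only [Finset.sum_add_distrib]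
        congr 1
        · refine Finset.sum_congr rfl fun a _ => ?_
          rw [Finset.sum_ite_eq' Finset.univ a, if_pos (Finset.mem_univ a)]
        · have : ∀ a a' : A, g a * g a' * K = (g a * g a') * K := fun _ _ => rfl
          calc ∑ a : A, ∑ a' : A, g a * g a' * K
              = (∑ a : A, ∑ a' : A, g a * g a') * K := by
                simp_rw [Finset.sum_mul]
            _ = K := by rw [← Finset.sum_mul_sum, hg1, one_mul, one_mul]
  done

end sumsplit

section claimA2

variable [Fintype A] {c b : ℝ → A → ℝ} {U : Set ℝ} {γ' γ : ℝ}

lemma claimA [Nonempty A] (h : IFSHyp c b U) (hγ : GammaBoundsA c γ' γ)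
    {C : ℝ} (hC : 0 < C)
    (hT : ∀ α β : ℕ → A, α 0 ≠ β 0 → ∀ rr > (0:ℝ),
      volume {p ∈ Ioo (-1:ℝ) 1 | |piA c b p α - piA c b p β| < rr} ≤ ENNReal.ofReal (C * rr))
    {J : Set ℝ} (hJ : J ⊆ Ioo (-1:ℝ) 1)
    {q L : A → ℝ} (hq : ∀ a, 0 < q a) (hq1 : ∑ a, q a = 1)
    (hL : ∀ a, 0 < L a)
    (hcb : ∀ p ∈ J, ∀ a : A, L a ≤ |c p a|)
    {ρ' : ℝ} (hρ'1 : ρ' < 1) (hρ : ∑ a, q a ^ 2 / L a ≤ ρ')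
    (abar : ℕ → A) (n : ℕ) :
    ∀ r, 0 < r →
    (∑ w : Fin n → A, ∑ w' : Fin n → A,
      ENNReal.ofReal ((List.ofFn w).map q).prod * ENNReal.ofReal ((List.ofFn w').map q).prod *
        volume {p ∈ J | |piA c b p (extSeq (List.ofFn w) abar)
          - piA c b p (extSeq (List.ofFn w') abar)| < r})
    ≤ ENNReal.ofReal (C / (1 - ρ') * r)
      + ENNReal.ofReal 2 * ENNReal.ofReal (∑ a, q a ^ 2) ^ n := by
  classical
  have hρ'0 : 0 < ρ' := by
    refine lt_of_lt_of_le ?_ hρ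
    refine Finset.sum_pos (fun a _ => ?_) Finset.univ_nonempty
    exact div_pos (pow_pos (hq a) 2) (hL a)
  have hK : 0 < C / (1 - ρ') := div_pos hC (by linarith)
  induction n with
  | zero =>
    intro r hr
    have hset : ∀ w w' : Fin 0 → A,
        {p ∈ J | |piA c b p (extSeq (List.ofFn w) abar)
          - piA c b p (extSeq (List.ofFn w') abar)| < r} = J := by
      intro w w'
      ext p
      simp [List.ofFn_zero, sub_self, abs_zero, hr]
    simp only [hset]
    have h2 : volume J ≤ ENNReal.ofReal 2 := by
      refine le_trans (measure_mono hJ) ?_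
      rw [Real.volume_Ioo]
      norm_num
    calc ∑ w : Fin 0 → A, ∑ w' : Fin 0 → A,
        ENNReal.ofReal ((List.ofFn w).map q).prod * ENNReal.ofReal ((List.ofFn w').map q).prod *
          volume J = volume J := by simp
      _ ≤ ENNReal.ofReal 2 := h2
      _ ≤ _ := by simp [le_add_of_nonneg_left]
  | succ n ih =>
    intro r hr
    have Qsplit : ∀ (a : A) (v : Fin n → A),
        ENNReal.ofReal ((List.ofFn (Fin.cons a v : Fin (n+1) → A)).map q).prod
        = ENNReal.ofReal (q a) * ENNReal.ofReal ((List.ofFn v).map q).prod := by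
      intro a v
      rw [ofFn_cons, List.map_cons, List.prod_cons, ENNReal.ofReal_mul (hq a).le]
    have hQ1 : ∑ a : A, ENNReal.ofReal (q a) = 1 := by
      rw [← ENNReal.ofReal_sum_of_nonneg (fun a _ => (hq a).le), hq1, ENNReal.ofReal_one]
    have pair : ∀ (a a' : A) (v v' : Fin n → A),
        volume {p ∈ J | |piA c b p (extSeq (List.ofFn (Fin.cons a v : Fin (n+1) → A)) abar)
          - piA c b p (extSeq (List.ofFn (Fin.cons a' v' : Fin (n+1) → A)) abar)| < r}
        ≤ (if a' = a then volume {p ∈ J | |piA c b p (extSeq (List.ofFn v) abar)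
            - piA c b p (extSeq (List.ofFn v') abar)| < r / L a} else 0)
          + ENNReal.ofReal (C * r) := by
      intro a a' v v'
      rw [ofFn_cons, ofFn_cons]
      by_cases hd : a' = a
      · subst hd
        rw [if_pos rfl]
        refine le_trans (measure_mono ?_) (self_le_add_right _ _)
        intro p hp
        obtain ⟨hpJ, hplt⟩ := hp
        have hpIcc : p ∈ Icc (-1:ℝ) 1 := Ioo_subset_Icc_self (hJ hpJ)
        refine ⟨hpJ, ?_⟩
        rw [extSeq_cons, extSeq_cons, piA_consF h hγ hpIcc, piA_consF h hγ hpIcc] at hplt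
        have heq : c p a' * piA c b p (extSeq (List.ofFn v) abar) + b p a'
            - (c p a' * piA c b p (extSeq (List.ofFn v') abar) + b p a')
            = c p a' * (piA c b p (extSeq (List.ofFn v) abar)
              - piA c b p (extSeq (List.ofFn v') abar)) := by ring
        rw [heq, abs_mul] at hplt
        rw [lt_div_iff₀ (hL a'), mul_comm]
        calc L a' * |piA c b p (extSeq (List.ofFn v) abar)
              - piA c b p (extSeq (List.ofFn v') abar)|
            ≤ |c p a'| * |piA c b p (extSeq (List.ofFn v) abar)
              - piA c b p (extSeq (List.ofFn v') abar)| :=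
              mul_le_mul_of_nonneg_right (hcb p hpJ a') (abs_nonneg _)
          _ < r := hplt
      · rw [if_neg hd, zero_add]
        refine le_trans (measure_mono ?_) (hT (extSeq (a :: List.ofFn v) abar)
          (extSeq (a' :: List.ofFn v') abar) ?_ r hr)
        · intro p hp
          exact ⟨hJ hp.1, hp.2⟩
        · simp only [extSeq_cons, consF_zero]
          exact fun e => hd e.symm
    refine le_trans
      (sum_split (fun a => ENNReal.ofReal (q a))
        (fun v : Fin n → A => ENNReal.ofReal ((List.ofFn v).map q).prod)
        (fun w : Fin (n+1) → A => ENNReal.ofReal ((List.ofFn w).map q).prod)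
        Qsplit
        (fun w w' : Fin (n+1) → A => volume {p ∈ J | |piA c b p (extSeq (List.ofFn w) abar)
          - piA c b p (extSeq (List.ofFn w') abar)| < r})
        (fun a (v v' : Fin n → A) => volume {p ∈ J | |piA c b p (extSeq (List.ofFn v) abar)
          - piA c b p (extSeq (List.ofFn v') abar)| < r / L a})
        (ENNReal.ofReal (C * r)) pair hQ1 (sum_QL (fun a => (hq a).le) hq1 n)) ?_
    have hstep : ∀ a : A,
        ENNReal.ofReal (q a) * ENNReal.ofReal (q a) *
          (∑ v : Fin n → A, ∑ v' : Fin n → A,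
            ENNReal.ofReal ((List.ofFn v).map q).prod *
            ENNReal.ofReal ((List.ofFn v').map q).prod *
            volume {p ∈ J | |piA c b p (extSeq (List.ofFn v) abar)
              - piA c b p (extSeq (List.ofFn v') abar)| < r / L a})
        ≤ ENNReal.ofReal (q a * q a * (C / (1 - ρ') * (r / L a)))
          + ENNReal.ofReal (q a * q a) * (ENNReal.ofReal 2
              * ENNReal.ofReal (∑ a, q a ^ 2) ^ n) := by
      intro a
      have h1 := ih (r / L a) (div_pos hr (hL a))
      calc ENNReal.ofReal (q a) * ENNReal.ofReal (q a) * _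
          ≤ ENNReal.ofReal (q a) * ENNReal.ofReal (q a) *
            (ENNReal.ofReal (C / (1 - ρ') * (r / L a))
              + ENNReal.ofReal 2 * ENNReal.ofReal (∑ a, q a ^ 2) ^ n) :=
            mul_le_mul_right h1 _
        _ = ENNReal.ofReal (q a * q a * (C / (1 - ρ') * (r / L a)))
            + ENNReal.ofReal (q a * q a) * (ENNReal.ofReal 2
                * ENNReal.ofReal (∑ a, q a ^ 2) ^ n) := by
            rw [← ENNReal.ofReal_mul (hq a).le, mul_add,
              ← ENNReal.ofReal_mul (mul_nonneg (hq a).le (hq a).le)]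
    refine le_trans (add_le_add_left (Finset.sum_le_sum fun a _ => hstep a) _) ?_
    rw [Finset.sum_add_distrib]
    have e1 : ∑ a : A, ENNReal.ofReal (q a * q a * (C / (1 - ρ') * (r / L a)))
        ≤ ENNReal.ofReal (ρ' * (C / (1 - ρ') * r)) := by
      rw [← ENNReal.ofReal_sum_of_nonneg (fun a _ =>
        mul_nonneg (mul_nonneg (hq a).le (hq a).le)
          (mul_nonneg hK.le (div_nonneg hr.le (hL a).le)))]
      refine ENNReal.ofReal_le_ofReal ?_
      have : ∀ a : A, q a * q a * (C / (1 - ρ') * (r / L a))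
          = q a ^ 2 / L a * (C / (1 - ρ') * r) := by
        intro a
        have hLa : L a ≠ 0 := (hL a).ne'
        field_simp
      rw [Finset.sum_congr rfl fun a _ => this a, ← Finset.sum_mul]
      exact mul_le_mul_of_nonneg_right hρ (by positivity)
    have e2 : ∑ a : A, ENNReal.ofReal (q a * q a) * (ENNReal.ofReal 2
        * ENNReal.ofReal (∑ a, q a ^ 2) ^ n)
        = ENNReal.ofReal 2 * ENNReal.ofReal (∑ a, q a ^ 2) ^ (n + 1) := by
      rw [← Finset.sum_mul]
      have : ∑ a : A, ENNReal.ofReal (q a * q a) = ENNReal.ofReal (∑ a, q a ^ 2) := by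
        rw [← ENNReal.ofReal_sum_of_nonneg (fun a _ => mul_nonneg (hq a).le (hq a).le)]
        congr 1
        exact Finset.sum_congr rfl fun a _ => by ring
      rw [this, pow_succ]
      ring
    rw [e2]
    refine le_trans (add_le_add_left (add_le_add_left e1 _) _) ?_
    rw [add_right_comm, ← ENNReal.ofReal_add (by positivity) (mul_nonneg hC.le hr.le)]
    have h1ρ : (1:ℝ) - ρ' ≠ 0 := by linarith
    have : ρ' * (C / (1 - ρ') * r) + C * r = C / (1 - ρ') * r := by
      field_simp
      ring
    rw [this]

end claimA2

section claimB

lemma claimB {ι : Type} [Fintype ι] (Q : ι → ℝ≥0∞) (hQ1 : ∑ i, Q i = 1) (x : ι → ℝ)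
    {r : ℝ} (hr : 0 < r) {N : Set ℝ} (hNm : MeasurableSet N)
    (hN : ∀ i, Ioo (x i - r) (x i + r) ⊆ N) :
    ENNReal.ofReal (2*r)
      ≤ (∑ i, ∑ j, Q i * Q j * (if |x i - x j| < 2*r then (1:ℝ≥0∞) else 0)) * volume N := by
  classical
  set f : ℝ → ℝ≥0∞ := fun y => ∑ i, Q i * (Ioo (x i - r) (x i + r)).indicator 1 y with hfdef
  have hmi : ∀ i : ι, Measurable fun y => Q i * (Ioo (x i - r) (x i + r)).indicator (1:ℝ → ℝ≥0∞) y :=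
    fun i => (measurable_one.indicator measurableSet_Ioo).const_mul _
  have hfmeas : Measurable f := by
    apply Finset.measurable_sum
    exact fun i _ => hmi i
  have hvol : ∀ i : ι, volume (Ioo (x i - r) (x i + r)) = ENNReal.ofReal (2*r) := by
    intro i
    rw [Real.volume_Ioo]
    congr 1
    ring
  have hint1 : ∫⁻ y, f y = ENNReal.ofReal (2*r) := by
    rw [hfdef]
    rw [lintegral_finset_sum _ (fun i _ => hmi i)]
    have : ∀ i : ι, ∫⁻ y, Q i * (Ioo (x i - r) (x i + r)).indicator 1 y
        = Q i * ENNReal.ofReal (2*r) := by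
      intro i
      rw [lintegral_const_mul _ (measurable_one.indicator measurableSet_Ioo),
        lintegral_indicator_one measurableSet_Ioo, hvol i]
    rw [Finset.sum_congr rfl fun i _ => this i, ← Finset.sum_mul, hQ1, one_mul]
  set g : ℝ → ℝ≥0∞ := fun y => N.indicator 1 y with hgdef
  have hgmeas : Measurable g := measurable_one.indicator hNm
  have hfg : ∀ y, f y = (f * g) y := by
    intro y
    by_cases hy : y ∈ N
    · simp [hgdef, Set.indicator_of_mem hy]
    · have h0 : f y = 0 := by
        rw [hfdef]
        refine Finset.sum_eq_zero fun i _ => ?_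
        rw [Set.indicator_of_notMem (fun hmem => hy (hN i hmem)), mul_zero]
      simp [h0]
  have hconj : Real.HolderConjugate 2 2 := Real.HolderConjugate.two_two
  have hH := ENNReal.lintegral_mul_le_Lp_mul_Lq volume hconj hfmeas.aemeasurable
    hgmeas.aemeasurable
  have hg2 : ∫⁻ y, g y ^ (2:ℝ) = volume N := by
    have : ∀ y, g y ^ (2:ℝ) = g y := by
      intro y
      rw [hgdef]
      by_cases hy : y ∈ N
      · simp [Set.indicator_of_mem hy]
      · simp [Set.indicator_of_notMem hy]
    simp_rw [this]
    rw [hgdef, lintegral_indicator_one hNm]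
  set F : ℝ≥0∞ := ∑ i, ∑ j, Q i * Q j * (if |x i - x j| < 2*r then (1:ℝ≥0∞) else 0) with hFdef
  have hf2 : ∫⁻ y, f y ^ (2:ℝ) ≤ ENNReal.ofReal (2*r) * F := by
    have hsq : ∀ y, f y ^ (2:ℝ) = ∑ i, ∑ j, (Q i * Q j) *
        ((Ioo (x i - r) (x i + r)) ∩ (Ioo (x j - r) (x j + r))).indicator 1 y := by
      intro y
      have h2 : (2:ℝ) = ((2:ℕ):ℝ) := by norm_num
      rw [h2, ENNReal.rpow_natCast, pow_two, hfdef]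
      rw [Finset.sum_mul_sum]
      refine Finset.sum_congr rfl fun i _ => Finset.sum_congr rfl fun j _ => ?_
      have : (Ioo (x i - r) (x i + r)).indicator (1:ℝ → ℝ≥0∞) y *
          (Ioo (x j - r) (x j + r)).indicator 1 y
          = ((Ioo (x i - r) (x i + r)) ∩ (Ioo (x j - r) (x j + r))).indicator 1 y :=
        (congrFun Set.inter_indicator_one y).symm
      calc Q i * (Ioo (x i - r) (x i + r)).indicator 1 y *
            (Q j * (Ioo (x j - r) (x j + r)).indicator 1 y)
          = (Q i * Q j) * ((Ioo (x i - r) (x i + r)).indicator 1 y *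
              (Ioo (x j - r) (x j + r)).indicator 1 y) := by ring
        _ = _ := by rw [this]
    simp_rw [hsq]
    rw [lintegral_finset_sum _ (fun i _ => Finset.measurable_sum _ fun j _ =>
      (measurable_one.indicator (measurableSet_Ioo.inter measurableSet_Ioo)).const_mul _)]
    rw [Finset.sum_congr rfl fun i _ => lintegral_finset_sum _ (fun j _ =>
      (measurable_one.indicator (measurableSet_Ioo.inter measurableSet_Ioo)).const_mul _)]
    have hterm : ∀ i j : ι, ∫⁻ y, (Q i * Q j) *
        ((Ioo (x i - r) (x i + r)) ∩ (Ioo (x j - r) (x j + r))).indicator 1 y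
        ≤ (Q i * Q j) * ((if |x i - x j| < 2*r then (1:ℝ≥0∞) else 0) * ENNReal.ofReal (2*r)) := by
      intro i j
      rw [lintegral_const_mul _ (measurable_one.indicator
        (measurableSet_Ioo.inter measurableSet_Ioo)),
        lintegral_indicator_one (measurableSet_Ioo.inter measurableSet_Ioo)]
      refine mul_le_mul_right ?_ _
      by_cases hd : |x i - x j| < 2*r
      · rw [if_pos hd, one_mul]
        refine le_trans (measure_mono Set.inter_subset_left) ?_
        rw [hvol i]
      · rw [if_neg hd, zero_mul]
        have : (Ioo (x i - r) (x i + r)) ∩ (Ioo (x j - r) (x j + r)) = ∅ := by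
          refine Set.eq_empty_of_forall_notMem ?_
          rintro y ⟨⟨a1, a2⟩, b1, b2⟩
          apply hd
          have h1 : |x i - y| < r := abs_sub_lt_iff.mpr ⟨by linarith, by linarith⟩
          have h2 : |y - x j| < r := abs_sub_lt_iff.mpr ⟨by linarith, by linarith⟩
          calc |x i - x j| ≤ |x i - y| + |y - x j| := abs_sub_le _ _ _
            _ < 2*r := by linarith
        rw [this]
        simp
    refine le_trans (Finset.sum_le_sum fun i _ => Finset.sum_le_sum fun j _ => hterm i j) ?_
    have : ∀ i j : ι, (Q i * Q j) * ((if |x i - x j| < 2*r then (1:ℝ≥0∞) else 0)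
        * ENNReal.ofReal (2*r))
        = ENNReal.ofReal (2*r) * ((Q i * Q j) * (if |x i - x j| < 2*r then (1:ℝ≥0∞) else 0)) :=
      fun i j => by ring
    simp_rw [this, ← Finset.mul_sum]
    rw [hFdef]
  -- combine
  have hmain : ENNReal.ofReal (2*r) ≤ (ENNReal.ofReal (2*r) * F) ^ ((1:ℝ)/2)
      * (volume N) ^ ((1:ℝ)/2) := by
    calc ENNReal.ofReal (2*r) = ∫⁻ y, f y := hint1.symm
      _ = ∫⁻ y, (f * g) y := by
          refine lintegral_congr fun y => hfg y
      _ ≤ (∫⁻ y, f y ^ (2:ℝ)) ^ ((1:ℝ)/2) * (∫⁻ y, g y ^ (2:ℝ)) ^ ((1:ℝ)/2) := hH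
      _ ≤ _ := by
          rw [hg2]
          exact mul_le_mul_left (ENNReal.rpow_le_rpow hf2 (by norm_num)) _
  have hsq : ENNReal.ofReal (2*r) * ENNReal.ofReal (2*r)
      ≤ (ENNReal.ofReal (2*r) * F) * volume N := by
    calc ENNReal.ofReal (2*r) * ENNReal.ofReal (2*r)
        ≤ ((ENNReal.ofReal (2*r) * F) ^ ((1:ℝ)/2) * (volume N) ^ ((1:ℝ)/2))
          * ((ENNReal.ofReal (2*r) * F) ^ ((1:ℝ)/2) * (volume N) ^ ((1:ℝ)/2)) :=
          mul_le_mul' hmain hmain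
      _ = ((ENNReal.ofReal (2*r) * F) ^ ((1:ℝ)/2) * (ENNReal.ofReal (2*r) * F) ^ ((1:ℝ)/2))
          * ((volume N) ^ ((1:ℝ)/2) * (volume N) ^ ((1:ℝ)/2)) := by ring
      _ = (ENNReal.ofReal (2*r) * F) * volume N := by
          rw [← ENNReal.rpow_add_of_nonneg ((1:ℝ)/2) ((1:ℝ)/2)
              (by norm_num) (by norm_num),
            ← ENNReal.rpow_add_of_nonneg ((1:ℝ)/2) ((1:ℝ)/2)
              (by norm_num) (by norm_num)]
          norm_num
  have h2r0 : ENNReal.ofReal (2*r) ≠ 0 := (ENNReal.ofReal_pos.mpr (by linarith)).ne'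
  rw [mul_assoc] at hsq
  exact (ENNReal.mul_le_mul_iff_right h2r0 ENNReal.ofReal_ne_top).mp hsq

end claimB

section compactness

variable [Fintype A] {c b : ℝ → A → ℝ} {U : Set ℝ} {γ' γ : ℝ}

lemma piA_range_isCompact (h : IFSHyp c b U) (hγ : GammaBoundsA c γ' γ)
    {p : ℝ} (hp : p ∈ Icc (-1:ℝ) 1) : IsCompact (Set.range (piA c b p)) := by
  letI : TopologicalSpace A := ⊥
  haveI : DiscreteTopology A := ⟨rfl⟩
  have hγ0 : 0 < γ := lt_trans hγ.1 hγ.2.1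
  have hcont : Continuous (piA c b p) := by
    have htu : TendstoUniformly (fun n (α : ℕ → A) => psiA c b p (Paper.trunc α n) 0)
        (piA c b p) atTop := by
      rw [Metric.tendstoUniformly_iff]
      intro ε hε
      have hlim : Tendsto (fun n : ℕ => 1 * γ ^ n / (1 - γ)) atTop (𝓝 0) := by
        rw [show (0:ℝ) = 1 * 0 / (1-γ) by ring]
        exact ((tendsto_pow_atTop_nhds_zero_of_lt_one (le_of_lt hγ0)
          hγ.2.2.1).const_mul 1).div_const _
      filter_upwards [hlim.eventually (eventually_lt_nhds hε)] with n hn α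
      rw [dist_comm]
      exact lt_of_le_of_lt (piA_dist h hγ (fun _ => trivial) hp α n) hn
    refine htu.continuous (Filter.Eventually.of_forall fun n => ?_).frequently
    have : (fun α : ℕ → A => psiA c b p (Paper.trunc α n) 0)
        = (fun v : Fin n → A => psiA c b p (List.ofFn v) 0)
          ∘ (fun (α : ℕ → A) (i : Fin n) => α (i : ℕ)) := rfl
    rw [this]
    exact (continuous_of_discreteTopology).comp
      (continuous_pi fun i => continuous_apply ((i : ℕ)))
  exact isCompact_range hcont

lemma vol_of_thickening (K : Set ℝ) (hKcl : IsClosed K) (hKne : K.Nonempty)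
    (hKb : K ⊆ Icc (-1:ℝ) 1) {ε : ℝ≥0∞}
    (hε : ∀ r : ℝ, 0 < r → ε ≤ volume (Metric.thickening r K)) : ε ≤ volume K := by
  have hiter : K = ⋂ (k : ℕ), Metric.thickening (1/(k+1)) K := by
    ext y
    constructor
    · intro hy
      refine Set.mem_iInter.mpr fun k => Metric.self_subset_thickening (by positivity) _ hy
    · intro hy
      rw [Set.mem_iInter] at hy
      have hinf : ∀ k : ℕ, Metric.infDist y K < 1/(k+1) := fun k =>
        (Metric.mem_thickening_iff_infDist_lt hKne).mp (hy k)
      have h0 : Metric.infDist y K ≤ 0 := by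
        refine ge_of_tendsto tendsto_one_div_add_atTop_nhds_zero_nat ?_
        exact Filter.Eventually.of_forall fun k => (hinf k).le
      rw [(hKcl.mem_iff_infDist_zero hKne)]
      exact le_antisymm h0 Metric.infDist_nonneg
  have hanti : Antitone fun k : ℕ => Metric.thickening (1/(k+1)) K := by
    intro i j hij
    refine Metric.thickening_mono ?_ K
    have : (i:ℝ) + 1 ≤ (j:ℝ) + 1 := by exact_mod_cast by omega
    exact one_div_le_one_div_of_le (by positivity) this
  have hfin : ∃ k : ℕ, volume (Metric.thickening (1/(k+1)) K) ≠ ∞ := by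
    refine ⟨0, ?_⟩
    have h01 : (1:ℝ)/((0:ℕ)+1) = 1 := by norm_num
    rw [h01]
    have hsub : Metric.thickening (1:ℝ) K ⊆ Ioo (-3:ℝ) 3 := by
      intro x hx
      rw [Metric.mem_thickening_iff] at hx
      obtain ⟨z, hz, hdz⟩ := hx
      have h1 : |z| ≤ 1 := abs_le.mpr ⟨(hKb hz).1, (hKb hz).2⟩
      have h2 : |x - z| < 1 := by
        rw [← Real.dist_eq]
        simpa using hdz
      constructor
      · nlinarith [abs_le.mp h1, abs_lt.mp h2]
      · nlinarith [abs_le.mp h1, abs_lt.mp h2]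
    refine ne_of_lt (lt_of_le_of_lt (measure_mono hsub) ?_)
    rw [Real.volume_Ioo]
    exact ENNReal.ofReal_lt_top
  have := hanti.measure_iInter (fun k => (Metric.isOpen_thickening).nullMeasurableSet) hfin
  rw [hiter, this]
  exact le_iInf fun k => hε _ (by positivity)

end compactness

section mainlocal

variable [Fintype A] {c b : ℝ → A → ℝ} {U : Set ℝ} {γ' γ : ℝ}

lemma main_local (h : IFSHyp c b U) (hγ : GammaBoundsA c γ' γ)
    (hcard : 2 ≤ Fintype.card A)
    {C : ℝ} (hC : 0 < C)
    (hT : ∀ α β : ℕ → A, α 0 ≠ β 0 → ∀ rr > (0:ℝ),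
      volume {p ∈ Ioo (-1:ℝ) 1 | |piA c b p α - piA c b p β| < rr} ≤ ENNReal.ofReal (C * rr))
    (Δ : ℝ → ℝ)
    (hΔdef : ∀ p ∈ Icc (-1:ℝ) 1, 0 ≤ Δ p ∧ ∑ a : A, |c p a| ^ Δ p = 1)
    (hΔ : ∀ p ∈ Icc (-1:ℝ) 1, 1 < Δ p)
    (p₀ : ℝ) (hp₀ : p₀ ∈ Icc (-1:ℝ) 1) :
    ∃ η > (0:ℝ), ∀ᵐ p ∂(volume : Measure ℝ),
      p ∈ Ioo (p₀ - η) (p₀ + η) ∩ Ioo (-1:ℝ) 1 → 0 < volume (Set.range (piA c b p)) := by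
  classical
  haveI : Nonempty A := Fintype.card_pos_iff.mp (by omega)
  set abar : ℕ → A := fun _ => Classical.arbitrary A with habar
  have hγ'0 : 0 < γ' := hγ.1
  have hγ1 : γ < 1 := hγ.2.2.1
  have hγ0 : 0 < γ := lt_trans hγ'0 hγ.2.1
  have hΔ1 : 1 < Δ p₀ := hΔ p₀ hp₀
  have hΛ : ∀ a : A, γ' < |c p₀ a| ∧ |c p₀ a| < γ := fun a => hγ.2.2.2 p₀ hp₀ a
  have hΛpos : ∀ a : A, 0 < |c p₀ a| := fun a => lt_trans hγ'0 (hΛ a).1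
  set q : A → ℝ := fun a => |c p₀ a| ^ Δ p₀ with hqdef
  have hqpos : ∀ a, 0 < q a := fun a => Real.rpow_pos_of_pos (hΛpos a) _
  have hq1 : ∑ a, q a = 1 := (hΔdef p₀ hp₀).2
  have hqlt1 : ∀ a, q a < 1 := fun a =>
    Real.rpow_lt_one (hΛpos a).le (lt_trans (hΛ a).2 hγ1) (by linarith)
  set σ₂ : ℝ := ∑ a, q a ^ 2 with hσ₂def
  have hσ₂pos : 0 < σ₂ :=
    Finset.sum_pos (fun a _ => pow_pos (hqpos a) 2) Finset.univ_nonempty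
  have hσ₂1 : σ₂ < 1 := by
    have : ∑ a, q a ^ 2 < ∑ a, q a := by
      refine Finset.sum_lt_sum_of_nonempty Finset.univ_nonempty fun a _ => ?_
      nlinarith [hqpos a, hqlt1 a]
    rw [hσ₂def]
    linarith [hq1 ▸ this]
  set ρ : ℝ := ∑ a, q a ^ 2 / |c p₀ a| with hρdef
  have hρpos : 0 < ρ :=
    Finset.sum_pos (fun a _ => div_pos (pow_pos (hqpos a) 2) (hΛpos a)) Finset.univ_nonempty
  have hρ1 : ρ < 1 := by
    have hterm : ∀ a : A, q a ^ 2 / |c p₀ a| < q a := by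
      intro a
      have hsplit : q a ^ 2 / |c p₀ a| = q a * (|c p₀ a| ^ (Δ p₀ - 1)) := by
        rw [hqdef]
        rw [pow_two, Real.rpow_sub (hΛpos a), Real.rpow_one]
        field_simp
      rw [hsplit]
      have hlt : |c p₀ a| ^ (Δ p₀ - 1) < 1 :=
        Real.rpow_lt_one (hΛpos a).le (lt_trans (hΛ a).2 hγ1) (by linarith)
      nlinarith [hqpos a, Real.rpow_pos_of_pos (hΛpos a) (Δ p₀ - 1)]
    have : ∑ a, q a ^ 2 / |c p₀ a| < ∑ a, q a :=
      Finset.sum_lt_sum_of_nonempty Finset.univ_nonempty fun a _ => hterm a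
    rw [hρdef]; linarith [hq1 ▸ this]
  set ρ' : ℝ := (1 + ρ)/2 with hρ'def
  have hρρ' : ρ < ρ' := by rw [hρ'def]; linarith
  have hρ'1 : ρ' < 1 := by rw [hρ'def]; linarith
  have hρ'pos : 0 < ρ' := by rw [hρ'def]; linarith
  set θ : ℝ := ρ / ρ' with hθdef
  have hθpos : 0 < θ := div_pos hρpos hρ'pos
  have hθ1 : θ < 1 := (div_lt_one hρ'pos).mpr hρρ'
  have hkey : ∑ a, q a ^ 2 / (|c p₀ a| * θ) = ρ' := by
    have hterm : ∀ a : A, q a ^ 2 / (|c p₀ a| * θ) = (q a ^ 2 / |c p₀ a|) / θ := by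
      intro a; rw [div_div]
    rw [Finset.sum_congr rfl fun a _ => hterm a, ← Finset.sum_div, ← hρdef, hθdef]
    field_simp
  -- choose the neighborhood
  have hcont : ∀ a : A, ContinuousAt (fun p => |c p a|) p₀ := fun a =>
    continuous_abs.continuousAt.comp ((h.2.2.1 a).continuousAt (h.1.mem_nhds (h.2.1 hp₀)))
  have hev : ∀ᶠ p in 𝓝 p₀, ∀ a : A, |c p₀ a| * θ ≤ |c p a| := by
    rw [Filter.eventually_all]
    intro a
    have hlt : |c p₀ a| * θ < |c p₀ a| := by nlinarith [hΛpos a]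
    exact (hcont a).eventually (eventually_ge_nhds hlt)
  obtain ⟨η, hη, hball⟩ := Metric.eventually_nhds_iff_ball.mp hev
  refine ⟨η, hη, ?_⟩
  set J : Set ℝ := Ioo (p₀ - η) (p₀ + η) ∩ Ioo (-1:ℝ) 1 with hJdef
  have hJo : IsOpen J := (isOpen_Ioo).inter isOpen_Ioo
  have hJm : MeasurableSet J := hJo.measurableSet
  have hJI : J ⊆ Ioo (-1:ℝ) 1 := Set.inter_subset_right
  have hJIcc : J ⊆ Icc (-1:ℝ) 1 := fun p hp => Ioo_subset_Icc_self (hJI hp)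
  have hcb : ∀ p ∈ J, ∀ a : A, |c p₀ a| * θ ≤ |c p a| := by
    intro p hp a
    refine hball p ?_ a
    rw [Real.ball_eq_Ioo]
    exact hp.1
  have hclaimA := claimA (L := fun a => |c p₀ a| * θ) h hγ hC hT hJI hqpos hq1
    (fun a => mul_pos (hΛpos a) hθpos) hcb hρ'1 (le_of_eq hkey) abar
  obtain ⟨s, hs⟩ := exists_pow_lt_of_lt_one (by norm_num : (0:ℝ) < 1/2) hσ₂1
  set rj : ℕ → ℝ := fun j => ((1:ℝ)/2)^j with hrjdef
  have hrjpos : ∀ j, 0 < rj j := fun j => by positivity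
  set Eset : (n : ℕ) → (Fin n → A) → (Fin n → A) → ℝ → Set ℝ := fun n w w' rr =>
    {p ∈ J | |piA c b p (extSeq (List.ofFn w) abar)
      - piA c b p (extSeq (List.ofFn w') abar)| < rr} with hEdef
  have hEopen : ∀ (n : ℕ) (w w' : Fin n → A) (rr : ℝ), IsOpen (Eset n w w' rr) := by
    intro n w w' rr
    have hcnt : ContinuousOn (fun p => |piA c b p (extSeq (List.ofFn w) abar)
        - piA c b p (extSeq (List.ofFn w') abar)|) J :=
      (((piA_continuousOn h hγ _).mono hJIcc).sub ((piA_continuousOn h hγ _).mono hJIcc)).abs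
    have hopen := hcnt.isOpen_inter_preimage (t := Iio rr) hJo isOpen_Iio
    have : Eset n w w' rr = J ∩ (fun p => |piA c b p (extSeq (List.ofFn w) abar)
        - piA c b p (extSeq (List.ofFn w') abar)|) ⁻¹' (Iio rr) := rfl
    rw [this]
    exact hopen
  have hEsub : ∀ (n : ℕ) (w w' : Fin n → A) (rr : ℝ), Eset n w w' rr ⊆ J :=
    fun n w w' rr => Set.sep_subset _ _
  set Fpt : ℕ → ℝ → ℝ≥0∞ := fun j p =>
    ∑ w : Fin (s*j) → A, ∑ w' : Fin (s*j) → A,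
      ENNReal.ofReal ((List.ofFn w).map q).prod * ENNReal.ofReal ((List.ofFn w').map q).prod *
        (Eset (s*j) w w' (2 * rj j)).indicator 1 p with hFptdef
  have hFmeas : ∀ j, Measurable (Fpt j) := by
    intro j
    refine Finset.measurable_sum _ fun w _ => Finset.measurable_sum _ fun w' _ => ?_
    exact (measurable_one.indicator (hEopen _ _ _ _).measurableSet).const_mul _
  have hTeq : ∀ j, ∫⁻ p in J, Fpt j p
      = ∑ w : Fin (s*j) → A, ∑ w' : Fin (s*j) → A,
        ENNReal.ofReal ((List.ofFn w).map q).prod * ENNReal.ofReal ((List.ofFn w').map q).prod *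
          volume (Eset (s*j) w w' (2 * rj j)) := by
    intro j
    rw [hFptdef]
    rw [lintegral_finset_sum _ (fun w _ => Finset.measurable_sum _ fun w' _ =>
      (measurable_one.indicator (hEopen _ _ _ _).measurableSet).const_mul _)]
    refine Finset.sum_congr rfl fun w _ => ?_
    rw [lintegral_finset_sum _ (fun w' _ =>
      (measurable_one.indicator (hEopen _ _ _ _).measurableSet).const_mul _)]
    refine Finset.sum_congr rfl fun w' _ => ?_
    rw [lintegral_const_mul _ (measurable_one.indicator (hEopen _ _ _ _).measurableSet),
      lintegral_indicator_one (hEopen _ _ _ _).measurableSet,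
      Measure.restrict_apply (hEopen _ _ _ _).measurableSet,
      Set.inter_eq_self_of_subset_left (hEsub _ _ _ _)]
  have hIbound : ∀ j, ∫⁻ p in J, Fpt j p
      ≤ ENNReal.ofReal (C / (1 - ρ') * (2 * rj j))
        + ENNReal.ofReal 2 * ENNReal.ofReal σ₂ ^ (s*j) := by
    intro j
    rw [hTeq j]
    exact hclaimA (s*j) (2 * rj j) (by positivity)
  set Gf : ℝ → ℝ≥0∞ := fun p =>
    liminf (fun j : ℕ => ENNReal.ofReal ((2:ℝ)^j) * Fpt j p) atTop with hGdef
  have hGmeas : Measurable Gf :=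
    Measurable.liminf (fun j => (hFmeas j).const_mul _)
  have hpow1 : ∀ j : ℕ, ((2:ℝ)^j) * ((1/2:ℝ)^j) = 1 := by
    intro j
    rw [← mul_pow]
    norm_num
  have hjbound : ∀ j : ℕ, ENNReal.ofReal ((2:ℝ)^j) * (ENNReal.ofReal (C / (1 - ρ') * (2 * rj j))
      + ENNReal.ofReal 2 * ENNReal.ofReal σ₂ ^ (s*j))
      ≤ ENNReal.ofReal (2 * (C / (1 - ρ'))) + ENNReal.ofReal 2 := by
    intro j
    have hK0 : 0 ≤ C / (1 - ρ') := le_of_lt (div_pos hC (by linarith))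
    rw [mul_add]
    refine add_le_add ?_ ?_
    · rw [← ENNReal.ofReal_mul (by positivity)]
      refine ENNReal.ofReal_le_ofReal (le_of_eq ?_)
      rw [hrjdef]
      calc (2:ℝ)^j * (C / (1 - ρ') * (2 * (1/2:ℝ)^j))
          = (2 * (C / (1 - ρ'))) * ((2:ℝ)^j * (1/2:ℝ)^j) := by ring
        _ = 2 * (C / (1 - ρ')) := by rw [hpow1]; ring
    · have h1 : ENNReal.ofReal σ₂ ^ (s*j) ≤ ENNReal.ofReal ((1/2:ℝ)^j) := by
        rw [← ENNReal.ofReal_pow hσ₂pos.le]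
        refine ENNReal.ofReal_le_ofReal ?_
        rw [pow_mul]
        exact pow_le_pow_left₀ (by positivity) hs.le j
      calc ENNReal.ofReal ((2:ℝ)^j) * (ENNReal.ofReal 2 * ENNReal.ofReal σ₂ ^ (s*j))
          ≤ ENNReal.ofReal ((2:ℝ)^j) * (ENNReal.ofReal 2 * ENNReal.ofReal ((1/2:ℝ)^j)) :=
            mul_le_mul_right (mul_le_mul_right h1 _) _
        _ = ENNReal.ofReal ((2:ℝ)^j * (2 * (1/2:ℝ)^j)) := by
            rw [← ENNReal.ofReal_mul (by positivity), ← ENNReal.ofReal_mul (by positivity)]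
        _ = ENNReal.ofReal 2 := by
            congr 1
            calc (2:ℝ)^j * (2 * (1/2:ℝ)^j) = 2 * ((2:ℝ)^j * (1/2:ℝ)^j) := by ring
              _ = 2 := by rw [hpow1]; ring
  have hGbound : ∫⁻ p in J, Gf p ≤ ENNReal.ofReal (2 * (C / (1 - ρ'))) + ENNReal.ofReal 2 := by
    rw [hGdef]
    refine le_trans (lintegral_liminf_le fun j => (hFmeas j).const_mul _) ?_
    have hstep : ∀ j : ℕ, ∫⁻ p in J, ENNReal.ofReal ((2:ℝ)^j) * Fpt j p
        ≤ ENNReal.ofReal (2 * (C / (1 - ρ'))) + ENNReal.ofReal 2 := by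
      intro j
      rw [lintegral_const_mul _ (hFmeas j)]
      exact le_trans (mul_le_mul_right (hIbound j) _) (hjbound j)
    refine le_trans (Filter.liminf_le_liminf (Filter.Eventually.of_forall hstep)) ?_
    rw [Filter.liminf_const]
  have hfin : ∫⁻ p in J, Gf p ≠ ⊤ :=
    ne_of_lt (lt_of_le_of_lt hGbound (by
      exact lt_of_le_of_lt (le_refl _) (ENNReal.add_lt_top.mpr
        ⟨ENNReal.ofReal_lt_top, ENNReal.ofReal_lt_top⟩)))
  have hae : ∀ᵐ p ∂(volume : Measure ℝ), p ∈ J → Gf p < ⊤ := by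
    have := ae_lt_top hGmeas hfin
    rwa [ae_restrict_iff' hJm] at this
  filter_upwards [hae] with p hp hpJ
  have hGfin : Gf p < ⊤ := hp hpJ
  have hpIcc : p ∈ Icc (-1:ℝ) 1 := hJIcc hpJ
  set M : ℝ≥0∞ := Gf p + 1 with hMdef
  have hM0 : M ≠ 0 := by
    rw [hMdef]
    simp
  have hMtop : M ≠ ⊤ := ENNReal.add_ne_top.mpr ⟨hGfin.ne, ENNReal.one_ne_top⟩
  have hlim : Gf p < M := by
    rw [hMdef]
    exact ENNReal.lt_add_right hGfin.ne one_ne_zero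
  have hfreq : ∃ᶠ j in atTop, ENNReal.ofReal ((2:ℝ)^j) * Fpt j p < M := by
    simp only [hGdef] at hlim
    exact frequently_lt_of_liminf_lt (by isBoundedDefault) hlim
  have hB : ∀ j : ℕ, ENNReal.ofReal (2 * rj j)
      ≤ Fpt j p * volume (Metric.thickening (rj j) (Set.range (piA c b p))) := by
    intro j
    have hN : ∀ w : Fin (s*j) → A,
        Ioo (piA c b p (extSeq (List.ofFn w) abar) - rj j)
          (piA c b p (extSeq (List.ofFn w) abar) + rj j)
        ⊆ Metric.thickening (rj j) (Set.range (piA c b p)) := by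
      intro w
      rw [← Real.ball_eq_Ioo]
      exact Metric.ball_subset_thickening (Set.mem_range_self _) _
    have hcb2 := claimB (fun w : Fin (s*j) → A => ENNReal.ofReal ((List.ofFn w).map q).prod)
      (sum_QL (fun a => (hqpos a).le) hq1 (s*j))
      (fun w => piA c b p (extSeq (List.ofFn w) abar)) (hrjpos j)
      (Metric.isOpen_thickening.measurableSet) hN
    have hFeq : (∑ w : Fin (s*j) → A, ∑ w' : Fin (s*j) → A,
        ENNReal.ofReal ((List.ofFn w).map q).prod * ENNReal.ofReal ((List.ofFn w').map q).prod *
          (if |piA c b p (extSeq (List.ofFn w) abar)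
            - piA c b p (extSeq (List.ofFn w') abar)| < 2 * rj j then (1:ℝ≥0∞) else 0))
        = Fpt j p := by
      rw [hFptdef]
      refine Finset.sum_congr rfl fun w _ => Finset.sum_congr rfl fun w' _ => ?_
      congr 1
      by_cases hcond : |piA c b p (extSeq (List.ofFn w) abar)
          - piA c b p (extSeq (List.ofFn w') abar)| < 2 * rj j
      · have hmem : p ∈ Eset (s*j) w w' (2 * rj j) := ⟨hpJ, hcond⟩
        rw [if_pos hcond, Set.indicator_of_mem hmem]
        rfl
      · rw [if_neg hcond, Set.indicator_of_notMem (fun hmem => hcond hmem.2)]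
    rw [hFeq] at hcb2
    exact hcb2
  have hεb : ∀ r : ℝ, 0 < r → ENNReal.ofReal 2 / M
      ≤ volume (Metric.thickening r (Set.range (piA c b p))) := by
    intro r hr
    obtain ⟨k, hk⟩ := exists_pow_lt_of_lt_one hr (by norm_num : (1:ℝ)/2 < 1)
    obtain ⟨j, hjP, hjk⟩ := (hfreq.and_eventually (Filter.eventually_ge_atTop k)).exists
    have hrj_le : rj j ≤ r := by
      rw [hrjdef]
      exact le_trans (pow_le_pow_of_le_one (by norm_num) (by norm_num) hjk) hk.le
    refine le_trans ?_ (measure_mono (Metric.thickening_mono hrj_le _))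
    -- Fpt j p ≤ ofReal ((1/2)^j) * M
    have hFle : Fpt j p ≤ ENNReal.ofReal ((1/2:ℝ)^j) * M := by
      have h1 : Fpt j p = ENNReal.ofReal ((1/2:ℝ)^j) * (ENNReal.ofReal ((2:ℝ)^j) * Fpt j p) := by
        rw [← mul_assoc, ← ENNReal.ofReal_mul (by positivity)]
        rw [show ((1/2:ℝ)^j * (2:ℝ)^j) = 1 by rw [← mul_pow]; norm_num]
        rw [ENNReal.ofReal_one, one_mul]
      rw [h1]
      exact mul_le_mul_right hjP.le _
    have hchain : ENNReal.ofReal 2 * ENNReal.ofReal ((1/2:ℝ)^j)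
        ≤ (ENNReal.ofReal ((1/2:ℝ)^j) * M)
          * volume (Metric.thickening (rj j) (Set.range (piA c b p))) := by
      calc ENNReal.ofReal 2 * ENNReal.ofReal ((1/2:ℝ)^j)
          = ENNReal.ofReal (2 * rj j) := by
            rw [← ENNReal.ofReal_mul (by norm_num), hrjdef]
        _ ≤ Fpt j p * volume (Metric.thickening (rj j) (Set.range (piA c b p))) := hB j
        _ ≤ _ := mul_le_mul_left hFle _
    have hc0 : ENNReal.ofReal ((1/2:ℝ)^j) ≠ 0 := (ENNReal.ofReal_pos.mpr (by positivity)).ne'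
    have hctop : ENNReal.ofReal ((1/2:ℝ)^j) ≠ ⊤ := ENNReal.ofReal_ne_top
    have hcancel : ENNReal.ofReal 2
        ≤ M * volume (Metric.thickening (rj j) (Set.range (piA c b p))) := by
      have h2 : ENNReal.ofReal ((1/2:ℝ)^j) * ENNReal.ofReal 2
          ≤ ENNReal.ofReal ((1/2:ℝ)^j)
            * (M * volume (Metric.thickening (rj j) (Set.range (piA c b p)))) := by
        calc ENNReal.ofReal ((1/2:ℝ)^j) * ENNReal.ofReal 2
            = ENNReal.ofReal 2 * ENNReal.ofReal ((1/2:ℝ)^j) := by ring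
          _ ≤ (ENNReal.ofReal ((1/2:ℝ)^j) * M)
              * volume (Metric.thickening (rj j) (Set.range (piA c b p))) := hchain
          _ = ENNReal.ofReal ((1/2:ℝ)^j)
              * (M * volume (Metric.thickening (rj j) (Set.range (piA c b p)))) := by ring
      exact (ENNReal.mul_le_mul_iff_right hc0 hctop).mp h2
    rw [ENNReal.div_le_iff_le_mul (Or.inl hM0) (Or.inl hMtop)]
    calc ENNReal.ofReal 2 ≤ M * volume (Metric.thickening (rj j) (Set.range (piA c b p))) :=
        hcancel
      _ = volume (Metric.thickening (rj j) (Set.range (piA c b p))) * M := by ring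
  have hKcl : IsClosed (Set.range (piA c b p)) := (piA_range_isCompact h hγ hpIcc).isClosed
  have hKne : (Set.range (piA c b p)).Nonempty := Set.range_nonempty _
  have hKb : Set.range (piA c b p) ⊆ Icc (-1:ℝ) 1 :=
    Set.range_subset_iff.mpr (fun α => piA_mem h hγ hpIcc α)
  have hfinal := vol_of_thickening _ hKcl hKne hKb hεb
  exact lt_of_lt_of_le (ENNReal.div_pos (by norm_num) hMtop) hfinal

end mainlocal


/-- Theorem D (Simon, Solomyak, Urbański): positive measure of limit sets of
families of affine IFS satisfying the transversality condition. -/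
theorem theorem_D {A : Type} [Fintype A] (hA : 2 ≤ Fintype.card A)
    (c b : ℝ → A → ℝ) (U : Set ℝ) (h : IFSHyp c b U)
    (γ' γ : ℝ) (hγ : GammaBoundsA c γ' γ)
    (hT : TransAff c b)
    (Δ : ℝ → ℝ)
    (hΔdef : ∀ p ∈ Icc (-1:ℝ) 1, 0 ≤ Δ p ∧ ∑ a : A, |c p a| ^ Δ p = 1)
    (hΔ : ∀ p ∈ Icc (-1:ℝ) 1, 1 < Δ p) :
    ∀ᵐ p ∂(volume : Measure ℝ), p ∈ Ioo (-1:ℝ) 1 →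
      0 < volume (Set.range (piA c b p)) := by
  obtain ⟨C, hC, hTa⟩ := hT
  have hloc : ∀ i : ↥(Icc (-1:ℝ) 1), ∃ η > (0:ℝ), ∀ᵐ p ∂(volume : Measure ℝ),
      p ∈ Ioo ((i:ℝ) - η) ((i:ℝ) + η) ∩ Ioo (-1:ℝ) 1 →
        0 < volume (Set.range (piA c b p)) :=
    fun i => main_local h hγ hA hC hTa Δ hΔdef hΔ (i : ℝ) i.2
  choose η hη hAE using hloc
  have hcover : Icc (-1:ℝ) 1 ⊆ ⋃ i : ↥(Icc (-1:ℝ) 1), Ioo ((i:ℝ) - η i) ((i:ℝ) + η i) := by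
    intro x hx
    have hpos := hη ⟨x, hx⟩
    refine Set.mem_iUnion.mpr ⟨⟨x, hx⟩, ?_, ?_⟩ <;> simp <;> linarith
  obtain ⟨t, ht⟩ := isCompact_Icc.elim_finite_subcover
    (fun i : ↥(Icc (-1:ℝ) 1) => Ioo ((i:ℝ) - η i) ((i:ℝ) + η i))
    (fun i => isOpen_Ioo) hcover
  have hAEall : ∀ᵐ p ∂(volume : Measure ℝ), ∀ i ∈ t,
      p ∈ Ioo ((i:ℝ) - η i) ((i:ℝ) + η i) ∩ Ioo (-1:ℝ) 1 →
        0 < volume (Set.range (piA c b p)) :=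
    (ae_ball_iff t.countable_toSet).mpr (fun i _ => hAE i)
  filter_upwards [hAEall] with p hp hpIoo
  have hpIcc : p ∈ Icc (-1:ℝ) 1 := Ioo_subset_Icc_self hpIoo
  obtain ⟨i, hit, hpi⟩ := Set.mem_iUnion₂.mp (ht hpIcc)
  exact hp i hit ⟨hpi, hpIoo⟩

end IFS
end
end

section
/- Let (F_p)_{p∈P} be a family of C^r-skew-products satisfying assumption (U). There exists a real polynomial Q, positive on ℝ₊, such that for every p in the closure of P, every 𝔞 ∈ 𝒜^ℕ, every finite word α ∈ 𝒜^*, every x ∈ X and every pair of indices (i,j) ∈ {1,…,N}² with i > j, the modulus of the (i,j)-entry of the differential Dψ^α_{p,𝔞}(x) is at most Q(|α|)·λ_{p,𝔞,α}(x). -/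
open Filter MeasureTheory Set
open scoped Topology ENNReal NNReal

noncomputable section

namespace Paper


section Aux

lemma abs_coord_le_norm {n : ℕ} (x : E n) (i : Fin n) : |x i| ≤ ‖x‖ := by
  have h1 : ‖x i‖ ≤ ‖x‖ := by
    rw [EuclideanSpace.norm_eq]
    have h2 : ‖x i‖ = Real.sqrt (‖x i‖ ^ 2) := (Real.sqrt_sq (norm_nonneg _)).symm
    rw [h2]
    exact Real.sqrt_le_sqrt (Finset.single_le_sum (f := fun j => ‖x j‖ ^ 2)
      (fun j _ => sq_nonneg _) (Finset.mem_univ i))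
  simpa using h1

lemma euclid_decomp {n : ℕ} (v : E n) :
    v = ∑ m : Fin n, v m • EuclideanSpace.single m (1:ℝ) := by
  have h := (PiLp.basisFun 2 ℝ (Fin n)).sum_repr v
  conv_lhs => rw [← h]
  apply Finset.sum_congr rfl
  intro m _
  rw [PiLp.basisFun_apply, PiLp.basisFun_repr]

lemma abs_dentry_le {n : ℕ} (g : E n → E n) (x : E n) (i j : Fin n) :
    |dentry g x i j| ≤ ‖fderiv ℝ g x‖ := by
  have h1 := abs_coord_le_norm (fderiv ℝ g x (EuclideanSpace.single j (1:ℝ))) i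
  have h2 : ‖fderiv ℝ g x (EuclideanSpace.single j (1:ℝ))‖ ≤
      ‖fderiv ℝ g x‖ * ‖EuclideanSpace.single j (1:ℝ)‖ := (fderiv ℝ g x).le_opNorm _
  rw [EuclideanSpace.norm_single] at h2
  simp only [norm_one, mul_one] at h2
  exact le_trans h1 h2

lemma coord_sum {n : ℕ} (u : Fin n → E n) (i : Fin n) :
    (∑ m : Fin n, u m) i = ∑ m : Fin n, (u m) i :=
  map_sum (EuclideanSpace.proj (𝕜 := ℝ) i) u Finset.univ

lemma dentry_comp {n : ℕ} {g h : E n → E n} {x : E n}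
    (hg : DifferentiableAt ℝ g (h x)) (hh : DifferentiableAt ℝ h x) (i j : Fin n) :
    dentry (g ∘ h) x i j = ∑ m : Fin n, dentry g (h x) i m * dentry h x m j := by
  unfold dentry
  rw [fderiv_comp x hg hh]
  set L := fderiv ℝ g (h x) with hL
  set L' := fderiv ℝ h x with hL'
  have hv : L' (EuclideanSpace.single j (1:ℝ)) =
      ∑ m : Fin n, (L' (EuclideanSpace.single j (1:ℝ))) m • EuclideanSpace.single m (1:ℝ) :=
    euclid_decomp _
  have h0 : (L.comp L') (EuclideanSpace.single j (1:ℝ)) i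
      = L (L' (EuclideanSpace.single j (1:ℝ))) i := rfl
  rw [h0]
  conv_lhs => rw [hv]
  rw [map_sum, coord_sum]
  apply Finset.sum_congr rfl
  intro m _
  rw [ContinuousLinearMap.map_smul]
  have h3 : (L' (EuclideanSpace.single j (1:ℝ)) m • L (EuclideanSpace.single m (1:ℝ))) i
      = L' (EuclideanSpace.single j (1:ℝ)) m * L (EuclideanSpace.single m (1:ℝ)) i := rfl
  rw [h3]
  ring

lemma cube_closed (n : ℕ) : IsClosed (cube n) := by
  have h : cube n = ⋂ i : Fin n, (fun x : E n => x i) ⁻¹' Icc (-1:ℝ) 1 := by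
    ext x; simp [cube, Set.mem_iInter]
  rw [h]
  exact isClosed_iInter fun i =>
    IsClosed.preimage (EuclideanSpace.proj (𝕜 := ℝ) i).continuous isClosed_Icc

lemma cube_cpt (n : ℕ) : IsCompact (cube n) := by
  apply Metric.isCompact_of_isClosed_isBounded (cube_closed n)
  apply (Metric.isBounded_closedBall (x := (0 : E n)) (r := Real.sqrt n)).subset
  intro x hx
  rw [Metric.mem_closedBall, dist_zero_right, EuclideanSpace.norm_eq]
  apply Real.sqrt_le_sqrt
  calc ∑ i : Fin n, ‖x i‖ ^ 2 ≤ ∑ _i : Fin n, (1:ℝ) := by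
        apply Finset.sum_le_sum
        intro i _
        have h1 := (hx i).1
        have h2 := (hx i).2
        rw [Real.norm_eq_abs]
        nlinarith [sq_abs (x i)]
    _ = n := by simp

lemma cubeO_subset_cube (n : ℕ) : cubeO n ⊆ cube n := fun x hx i => Ioo_subset_Icc_self (hx i)

lemma closure_cubeO_cpt (n : ℕ) : IsCompact (closure (cubeO n)) :=
  (cube_cpt n).of_isClosed_subset isClosed_closure
    (closure_minimal (cubeO_subset_cube n) (cube_closed n))

variable {A : Type} {N d : ℕ} {r : ℕ∞}

lemma f_diffAt (S : SkewFamily A N d r) (hr : 2 ≤ r) (𝔞 : ℕ → A) {p : E d} {x : E N}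
    (hp : p ∈ S.P') (hx : x ∈ S.X') : DifferentiableAt ℝ (S.f p 𝔞) x := by
  have h1 : ContDiffAt ℝ r (fun q : E d × E N => S.f q.1 𝔞 q.2) (p, x) :=
    (S.smooth 𝔞).contDiffAt ((S.P'_open.prod S.X'_open).mem_nhds ⟨hp, hx⟩)
  have hr1 : (1 : WithTop ℕ∞) ≤ (r : WithTop ℕ∞) := by
    exact_mod_cast le_trans (by norm_num : (1:ℕ∞) ≤ 2) hr
  have h2 : DifferentiableAt ℝ (fun q : E d × E N => S.f q.1 𝔞 q.2) (p, x) :=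
    h1.differentiableAt (lt_of_lt_of_le zero_lt_one hr1).ne'
  exact h2.comp x ((differentiableAt_const p).prodMk differentiableAt_id)

lemma psi_mem_cube (S : SkewFamily A N d r) {p : E d} (hp : p ∈ S.P') (w : List A) :
    ∀ (𝔞 : ℕ → A), ∀ x ∈ cube N, psi S.f p w 𝔞 x ∈ cube N := by
  induction w with
  | nil => intro 𝔞 x hx; exact hx
  | cons a w ih =>
    intro 𝔞 x hx
    exact S.into (consF a 𝔞) p hp ⟨_, S.X_subset (ih (consF a 𝔞) x hx), rfl⟩

lemma psi_diffAt (S : SkewFamily A N d r) (hr : 2 ≤ r) {p : E d} (hp : p ∈ S.P')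
    (w : List A) : ∀ (𝔞 : ℕ → A), ∀ x ∈ cube N, DifferentiableAt ℝ (psi S.f p w 𝔞) x := by
  induction w with
  | nil => intro 𝔞 x _; exact differentiableAt_id
  | cons a w ih =>
    intro 𝔞 x hx
    exact (f_diffAt S hr _ hp (S.X_subset (psi_mem_cube S hp w _ x hx))).comp x (ih _ x hx)

lemma pow_linear_bound (t c : ℝ) (ht : 0 ≤ t) (hc : 0 ≤ c) :
    ∀ k : ℕ, t ^ k + k * c * t ^ (k - 1) ≤ (t + c) ^ k := by
  intro k
  induction k with
  | zero => simp
  | succ k ih =>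
    rcases Nat.eq_zero_or_pos k with hk | hk
    · subst hk; simp
    · have h1 : t * t ^ (k - 1) = t ^ k := by
        rw [← pow_succ']
        congr 1
        omega
      have h2 : (t + c) * (t ^ k + k * c * t ^ (k - 1)) ≤ (t + c) ^ (k + 1) := by
        rw [pow_succ']
        exact mul_le_mul_of_nonneg_left ih (by linarith)
      have h3 : (0:ℝ) ≤ t ^ (k - 1) := pow_nonneg ht _
      have h4 : (0:ℝ) ≤ t ^ k := pow_nonneg ht _
      have h6 : (k + 1) - 1 = k := by omega
      rw [h6]
      push_cast
      have h8 : (t + c) * (t ^ k + (k:ℝ) * c * t ^ (k - 1))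
          = t ^ (k+1) + (k:ℝ)*c*t^k + c*t^k + (k:ℝ)*c^2*t^(k-1) := by
        have h9 : t ^ (k+1) = t * t ^ k := by rw [pow_succ']
        linear_combination ((k:ℝ)*c) * h1 - h9
      have h10 : (0:ℝ) ≤ (k:ℝ)*c^2*t^(k-1) := by positivity
      linarith [h2, h8]

lemma exists_M (S : SkewFamily A N d r) (hr : 2 ≤ r) (a₀ : A) :
    ∃ M : ℝ, 1 ≤ M ∧ ∀ p ∈ closure (cubeO d), ∀ 𝔞 : ℕ → A, ∀ y ∈ cube N,
      ∀ i m : Fin N, |dentry (S.f p 𝔞) y i m| ≤ M := by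
  classical
  set 𝔞₀ : ℕ → A := fun _ => a₀ with h𝔞₀
  obtain ⟨C, hC, θ, hθ, hHol⟩ := S.holder1
  have hKsub : closure (cubeO d) ×ˢ cube N ⊆ S.P' ×ˢ S.X' :=
    Set.prod_mono S.P_subset S.X_subset
  have hopen : IsOpen (S.P' ×ˢ S.X') := S.P'_open.prod S.X'_open
  have hr1 : (1 : WithTop ℕ∞) ≤ (r : WithTop ℕ∞) := by
    exact_mod_cast le_trans (by norm_num : (1:ℕ∞) ≤ 2) hr
  have hcont : ContinuousOn (fderiv ℝ (fun q : E d × E N => S.f q.1 𝔞₀ q.2)) (S.P' ×ˢ S.X') :=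
    (S.smooth 𝔞₀).continuousOn_fderiv_of_isOpen hopen hr1
  obtain ⟨M₀, hM₀⟩ := ((closure_cubeO_cpt d).prod (cube_cpt N)).exists_bound_of_continuousOn
    (hcont.mono hKsub)
  refine ⟨max (M₀ + C) 1, le_max_right _ _, ?_⟩
  intro p hp 𝔞 y hy i m
  have hpP : p ∈ S.P' := S.P_subset hp
  have hyX : y ∈ S.X' := S.X_subset hy
  have hdj : ∀ 𝔟 : ℕ → A, DifferentiableAt ℝ (fun q : E d × E N => S.f q.1 𝔟 q.2) (p, y) :=
    fun 𝔟 => ((S.smooth 𝔟).contDiffAt (hopen.mem_nhds ⟨hpP, hyX⟩)).differentiableAt (lt_of_lt_of_le zero_lt_one hr1).ne'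
  have hpart : ∀ 𝔟 : ℕ → A, fderiv ℝ (S.f p 𝔟) y =
      (fderiv ℝ (fun q : E d × E N => S.f q.1 𝔟 q.2) (p, y)).comp
        (ContinuousLinearMap.inr ℝ (E d) (E N)) := by
    intro 𝔟
    have hcompeq : S.f p 𝔟 = (fun q : E d × E N => S.f q.1 𝔟 q.2) ∘ (fun y' : E N => (p, y')) :=
      rfl
    rw [hcompeq, fderiv_comp y (hdj 𝔟) ((hasFDerivAt_prodMk_right p y).differentiableAt)]
    congr 1
    exact (hasFDerivAt_prodMk_right p y).fderiv
  have hinr : ∀ (L : E d × E N →L[ℝ] E N),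
      ‖L.comp (ContinuousLinearMap.inr ℝ (E d) (E N))‖ ≤ ‖L‖ := by
    intro L
    apply ContinuousLinearMap.opNorm_le_bound _ (norm_nonneg L)
    intro z
    have h1 : ‖(ContinuousLinearMap.inr ℝ (E d) (E N)) z‖ = ‖z‖ := by
      simp [Prod.norm_def]
    calc ‖L ((ContinuousLinearMap.inr ℝ (E d) (E N)) z)‖
        ≤ ‖L‖ * ‖(ContinuousLinearMap.inr ℝ (E d) (E N)) z‖ := L.le_opNorm _
      _ = ‖L‖ * ‖z‖ := by rw [h1]
  have hd0 : ‖fderiv ℝ (S.f p 𝔞₀) y‖ ≤ M₀ := by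
    rw [hpart 𝔞₀]
    exact le_trans (hinr _) (hM₀ (p, y) ⟨hp, hy⟩)
  have hdiff : ‖fderiv ℝ (S.f p 𝔞) y - fderiv ℝ (S.f p 𝔞₀) y‖ ≤ C := by
    have h := hHol p hpP 𝔞 𝔞₀ 0 (fun i h => absurd h (Nat.not_lt_zero i)) y hyX
    rw [pow_zero, mul_one] at h
    exact h
  have hnorm : ‖fderiv ℝ (S.f p 𝔞) y‖ ≤ M₀ + C := by
    have h7 := norm_add_le (fderiv ℝ (S.f p 𝔞) y - fderiv ℝ (S.f p 𝔞₀) y)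
      (fderiv ℝ (S.f p 𝔞₀) y)
    rw [sub_add_cancel] at h7
    linarith
  exact le_trans (le_trans (abs_dentry_le _ _ _ _) hnorm) (le_max_left _ _)

lemma psi_single (S : SkewFamily A N d r) (p : E d) (a : A) (𝔞 : ℕ → A) :
    psi S.f p [a] 𝔞 = S.f p (consF a 𝔞) := by
  show S.f p (consF a 𝔞) ∘ id = S.f p (consF a 𝔞)
  exact Function.comp_id _

lemma lam_nonneg (hN : 0 < N) (f : E d → (ℕ → A) → E N → E N) (p : E d) (𝔞 : ℕ → A)
    (w : List A) (x : E N) : 0 ≤ lam hN f p 𝔞 w x := abs_nonneg _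

lemma key (S : SkewFamily A N d r) (hr : 2 ≤ r) (hN : 0 < N)
    (hU : UnipOn hN S.f S.P' S.X')
    {γ' γ : ℝ} (hγ : GammaBounds hN S.f γ' γ)
    {M : ℝ} (hM1 : 1 ≤ M)
    (hM : ∀ p ∈ closure (cubeO d), ∀ 𝔞 : ℕ → A, ∀ y ∈ cube N, ∀ i m : Fin N,
      |dentry (S.f p 𝔞) y i m| ≤ M)
    {p : E d} (hp : p ∈ closure (cubeO d)) (w : List A) :
    ∀ (𝔞 : ℕ → A), ∀ x ∈ cube N,
      (∀ i j : Fin N, (i:ℕ) < (j:ℕ) → dentry (psi S.f p w 𝔞) x i j = 0) ∧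
      (∀ i : Fin N, dentry (psi S.f p w 𝔞) x i i = dentry (psi S.f p w 𝔞) x ⟨0,hN⟩ ⟨0,hN⟩) ∧
      (∀ i j : Fin N, (j:ℕ) ≤ (i:ℕ) →
        |dentry (psi S.f p w 𝔞) x i j| ≤
          (M/γ' * ((w.length : ℝ)+1))^((i:ℕ)-(j:ℕ)) * lam hN S.f p 𝔞 w x) := by
  classical
  obtain ⟨hγ'0, hγ'γ, hγ1, hγbound⟩ := hγ
  have hpP : p ∈ S.P' := S.P_subset hp
  have hc1 : 1 ≤ M / γ' := by
    rw [le_div_iff₀ hγ'0]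
    nlinarith
  have hc0 : 0 < M / γ' := lt_of_lt_of_le one_pos hc1
  induction w with
  | nil =>
    intro 𝔞 x hx
    have hid : ∀ i j : Fin N, dentry (psi S.f p [] 𝔞) x i j = if i = j then 1 else 0 := by
      intro i j
      show dentry id x i j = _
      unfold dentry
      rw [fderiv_id]
      simp [EuclideanSpace.single_apply, eq_comm]
    have hlam : lam hN S.f p 𝔞 [] x = 1 := by
      unfold lam
      rw [hid]
      simp
    refine ⟨?_, ?_, ?_⟩
    · intro i j hij
      rw [hid]
      have hne : i ≠ j := by
        intro h
        subst h
        exact lt_irrefl _ hij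
      rw [if_neg hne]
    · intro i
      rw [hid, hid, if_pos rfl, if_pos rfl]
    · intro i j hij
      rw [hid, hlam, mul_one]
      by_cases h : i = j
      · subst h
        rw [if_pos rfl]
        simp only [Nat.sub_self, pow_zero, abs_one, le_refl]
      · rw [if_neg h]
        simp only [abs_zero]
        positivity
  | cons a w ih =>
    intro 𝔞 x hx
    set 𝔟 : ℕ → A := consF a 𝔞 with h𝔟
    set y : E N := psi S.f p w 𝔟 x with hy
    have hycube : y ∈ cube N := psi_mem_cube S hpP w 𝔟 x hx
    have hyX : y ∈ S.X' := S.X_subset hycube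
    have hdf : DifferentiableAt ℝ (S.f p 𝔟) y := f_diffAt S hr 𝔟 hpP hyX
    have hdpsi : DifferentiableAt ℝ (psi S.f p w 𝔟) x := psi_diffAt S hr hpP w 𝔟 x hx
    obtain ⟨ihT, ihD, ihB⟩ := ih 𝔟 x hx
    have hcomp : ∀ i j : Fin N, dentry (psi S.f p (a :: w) 𝔞) x i j
        = ∑ m : Fin N, dentry (S.f p 𝔟) y i m * dentry (psi S.f p w 𝔟) x m j := by
      intro i j
      show dentry (S.f p 𝔟 ∘ psi S.f p w 𝔟) x i j = _
      exact dentry_comp hdf hdpsi i j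
    obtain ⟨hUtri, hUdiag, hUpos, hUlt⟩ := hU p hpP 𝔟 y hyX
    have hγδ : γ' < |dentry (S.f p 𝔟) y ⟨0,hN⟩ ⟨0,hN⟩| := by
      have h1 := (hγbound p hp 𝔞 a y hycube).1
      have h2 : lam hN S.f p 𝔞 [a] y = |dentry (S.f p 𝔟) y ⟨0,hN⟩ ⟨0,hN⟩| := by
        unfold lam
        rw [psi_single]
      rwa [h2] at h1
    have hδ0 : 0 < |dentry (S.f p 𝔟) y ⟨0,hN⟩ ⟨0,hN⟩| := lt_trans hγ'0 hγδ
    have hdiagcomp : ∀ i : Fin N, dentry (psi S.f p (a :: w) 𝔞) x i i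
        = dentry (S.f p 𝔟) y ⟨0,hN⟩ ⟨0,hN⟩ * dentry (psi S.f p w 𝔟) x ⟨0,hN⟩ ⟨0,hN⟩ := by
      intro i
      rw [hcomp]
      rw [Finset.sum_eq_single i]
      · rw [hUdiag i ⟨0,hN⟩, ihD i]
      · intro m _ hmi
        have hvne : (m:ℕ) ≠ (i:ℕ) := fun h => hmi (Fin.val_injective h)
        rcases lt_or_gt_of_ne hvne with h | h
        · rw [ihT m i h, mul_zero]
        · rw [hUtri i m h, zero_mul]
      · intro h
        exact absurd (Finset.mem_univ i) h
    have hlamcons : lam hN S.f p 𝔞 (a :: w) x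
        = |dentry (S.f p 𝔟) y ⟨0,hN⟩ ⟨0,hN⟩| * lam hN S.f p 𝔟 w x := by
      show |dentry (psi S.f p (a :: w) 𝔞) x ⟨0,hN⟩ ⟨0,hN⟩| = _
      rw [hdiagcomp ⟨0,hN⟩, abs_mul]
      rfl
    refine ⟨?_, ?_, ?_⟩
    · -- triangularity
      intro i j hij
      rw [hcomp]
      apply Finset.sum_eq_zero
      intro m _
      rcases Nat.lt_or_ge (i:ℕ) (m:ℕ) with h | h
      · rw [hUtri i m h, zero_mul]
      · rw [ihT m j (lt_of_le_of_lt h hij), mul_zero]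
    · -- equal diagonal
      intro i
      rw [hdiagcomp i, hdiagcomp ⟨0,hN⟩]
    · -- bound
      intro i j hij
      set k : ℕ := (i:ℕ) - (j:ℕ) with hk
      set n : ℕ := w.length with hn
      set t : ℝ := M/γ' * ((n:ℝ)+1) with ht
      set lw : ℝ := lam hN S.f p 𝔟 w x with hlw
      have hlw0 : 0 ≤ lw := lam_nonneg hN S.f p 𝔟 w x
      have ht0 : 0 ≤ t := by positivity
      have ht1 : 1 ≤ t := by
        rw [ht]
        have hn1 : (1:ℝ) ≤ (n:ℝ)+1 := by
          have hn0 : (0:ℝ) ≤ (n:ℝ) := Nat.cast_nonneg n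
          linarith
        calc (1:ℝ) = 1 * 1 := by ring
          _ ≤ M/γ' * ((n:ℝ)+1) := mul_le_mul hc1 hn1 one_pos.le (le_of_lt hc0)
      set δa : ℝ := |dentry (S.f p 𝔟) y ⟨0,hN⟩ ⟨0,hN⟩| with hδa
      have hmain : |dentry (S.f p 𝔟) y i i * dentry (psi S.f p w 𝔟) x i j|
          ≤ δa * (t^k * lw) := by
        rw [abs_mul, hUdiag i ⟨0,hN⟩]
        exact mul_le_mul_of_nonneg_left (ihB i j hij) (abs_nonneg _)
      have hterm : ∀ m ∈ Finset.univ.erase i,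
          |dentry (S.f p 𝔟) y i m * dentry (psi S.f p w 𝔟) x m j| ≤
          (if (j:ℕ) ≤ (m:ℕ) ∧ (m:ℕ) < (i:ℕ) then M * (t^(k-1) * lw) else 0) := by
        intro m hm
        have hmi : m ≠ i := Finset.ne_of_mem_erase hm
        by_cases hcs : (j:ℕ) ≤ (m:ℕ) ∧ (m:ℕ) < (i:ℕ)
        · rw [if_pos hcs, abs_mul]
          have hAle : |dentry (S.f p 𝔟) y i m| ≤ M := hM p hp 𝔟 y hycube i m
          have hDle : |dentry (psi S.f p w 𝔟) x m j| ≤ t^(k-1) * lw := by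
            refine le_trans (ihB m j hcs.1) ?_
            apply mul_le_mul_of_nonneg_right _ hlw0
            apply pow_le_pow_right₀ ht1
            omega
          exact mul_le_mul hAle hDle (abs_nonneg _) (le_trans zero_le_one hM1)
        · rw [if_neg hcs]
          push_neg at hcs
          rcases Nat.lt_or_ge (m:ℕ) (j:ℕ) with h | h
          · rw [ihT m j h, mul_zero, abs_zero]
          · have h2 : (i:ℕ) ≤ (m:ℕ) := hcs h
            have h3 : (i:ℕ) < (m:ℕ) := by
              rcases lt_or_eq_of_le h2 with h' | h'
              · exact h'
              · exact absurd (Fin.val_injective h'.symm) hmi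
            rw [hUtri i m h3, zero_mul, abs_zero]
      have hcard : ((Finset.univ.erase i).filter
          (fun m : Fin N => (j:ℕ) ≤ (m:ℕ) ∧ (m:ℕ) < (i:ℕ))).card ≤ k := by
        have hmap : ∀ m ∈ (Finset.univ.erase i).filter
            (fun m : Fin N => (j:ℕ) ≤ (m:ℕ) ∧ (m:ℕ) < (i:ℕ)),
            (m:ℕ) ∈ Finset.Ico (j:ℕ) (i:ℕ) := by
          intro m hm
          rw [Finset.mem_filter] at hm
          rw [Finset.mem_Ico]
          exact hm.2
        calc ((Finset.univ.erase i).filter _).card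
            ≤ (Finset.Ico (j:ℕ) (i:ℕ)).card :=
              Finset.card_le_card_of_injOn Fin.val hmap
                (fun a _ b _ h => Fin.val_injective h)
          _ = k := by rw [Nat.card_Ico]
      have hoff : ∑ m ∈ Finset.univ.erase i,
          |dentry (S.f p 𝔟) y i m * dentry (psi S.f p w 𝔟) x m j|
          ≤ (k:ℝ) * (M * (t^(k-1) * lw)) := by
        refine le_trans (Finset.sum_le_sum hterm) ?_
        rw [← Finset.sum_filter]
        rw [Finset.sum_const, nsmul_eq_mul]
        apply mul_le_mul_of_nonneg_right _ (by positivity)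
        exact_mod_cast hcard
      have hsplit : |dentry (psi S.f p (a :: w) 𝔞) x i j| ≤
          |dentry (S.f p 𝔟) y i i * dentry (psi S.f p w 𝔟) x i j| +
          ∑ m ∈ Finset.univ.erase i,
            |dentry (S.f p 𝔟) y i m * dentry (psi S.f p w 𝔟) x m j| := by
        rw [hcomp]
        refine le_trans (Finset.abs_sum_le_sum_abs _ _) ?_
        rw [Finset.add_sum_erase Finset.univ
          (fun m => |dentry (S.f p 𝔟) y i m * dentry (psi S.f p w 𝔟) x m j|)
          (Finset.mem_univ i)]
      have hMc : M ≤ M/γ' * δa := by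
        have hMeq : M = M/γ' * γ' := by field_simp
        nlinarith [le_of_lt hγδ, le_of_lt hc0]
      have hpb := pow_linear_bound t (M/γ') ht0 (le_of_lt hc0) k
      have hgoalpre : |dentry (psi S.f p (a :: w) 𝔞) x i j| ≤ (t + M/γ')^k * (δa * lw) := by
        have e1 : (k:ℝ) * (M * (t^(k-1) * lw)) ≤ (k:ℝ) * (M/γ' * δa * (t^(k-1) * lw)) := by
          apply mul_le_mul_of_nonneg_left _ (Nat.cast_nonneg k)
          apply mul_le_mul_of_nonneg_right hMc
          positivity
        have e2 : (t^k + k * (M/γ') * t^(k-1)) * (δa * lw) ≤ (t + M/γ')^k * (δa * lw) :=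
          mul_le_mul_of_nonneg_right hpb (mul_nonneg (abs_nonneg _) hlw0)
        nlinarith [hsplit, hmain, hoff]
      have hlen : ((a :: w).length : ℝ) = (n:ℝ) + 1 := by
        rw [List.length_cons]
        push_cast
        rfl
      have hib : ((i:ℕ) - (j:ℕ)) = k := rfl
      rw [hlamcons, hlen]
      have hbase : M/γ' * ((n:ℝ) + 1 + 1) = t + M/γ' := by
        rw [ht]; ring
      rw [hbase]
      calc |dentry (psi S.f p (a :: w) 𝔞) x i j|
          ≤ (t + M/γ')^k * (δa * lw) := hgoalpre
        _ = (t + M/γ')^((i:ℕ)-(j:ℕ)) * (δa * lw) := rfl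
        _ = (t + M/γ')^((i:ℕ)-(j:ℕ)) * (|dentry (S.f p 𝔟) y ⟨0,hN⟩ ⟨0,hN⟩| * lam hN S.f p 𝔟 w x) := rfl

end Aux

/-- Lemma: polynomial bound on subdiagonal entries of the differential. -/
theorem lemma_polynome {A : Type} [Fintype A] {N d : ℕ} {r : ℕ∞}
    (hA : 2 ≤ Fintype.card A) (hN : 0 < N) (hd : 0 < d) (hr : 2 ≤ r)
    (S : SkewFamily A N d r)
    (hU : UnipOn hN S.f S.P' S.X')
    (γ' γ : ℝ) (hγ : GammaBounds hN S.f γ' γ) :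
    ∃ Q : Polynomial ℝ, (∀ x : ℝ, 0 ≤ x → 0 < Q.eval x) ∧
      ∀ p ∈ closure (cubeO d), ∀ (𝔞 : ℕ → A) (w : List A), ∀ x ∈ cube N,
        ∀ i j : Fin N, (j : ℕ) < (i : ℕ) →
          |dentry (psi S.f p w 𝔞) x i j| ≤ Q.eval (w.length : ℝ) * lam hN S.f p 𝔞 w x := by
  classical
  obtain ⟨hγ'0, hγ'γ, hγ1, hγbound⟩ := hγ
  have hApos : 0 < Fintype.card A := by omega
  obtain ⟨a₀⟩ := Fintype.card_pos_iff.mp hApos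
  obtain ⟨M, hM1, hM⟩ := exists_M S hr a₀
  have hc1 : 1 ≤ M / γ' := by
    rw [le_div_iff₀ hγ'0]
    nlinarith
  have hc0 : 0 < M / γ' := lt_of_lt_of_le one_pos hc1
  refine ⟨(Polynomial.C (M/γ') * (Polynomial.X + 1))^(N-1), ?_, ?_⟩
  · intro x hx
    have heval : ((Polynomial.C (M/γ') * (Polynomial.X + 1))^(N-1)).eval x
        = (M/γ' * (x+1))^(N-1) := by
      simp
    rw [heval]
    have h1 : 0 < M/γ' * (x+1) := by nlinarith
    positivity
  · intro p hp 𝔞 w x hx i j hij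
    obtain ⟨-, -, hB⟩ := key S hr hN hU ⟨hγ'0, hγ'γ, hγ1, hγbound⟩ hM1 hM hp w 𝔞 x hx
    refine le_trans (hB i j (le_of_lt hij)) ?_
    have heval : ((Polynomial.C (M/γ') * (Polynomial.X + 1))^(N-1)).eval ((w.length:ℝ))
        = (M/γ' * ((w.length:ℝ)+1))^(N-1) := by
      simp
    rw [heval]
    apply mul_le_mul_of_nonneg_right _ (lam_nonneg hN S.f p 𝔞 w x)
    apply pow_le_pow_right₀
    · have hn1 : (1:ℝ) ≤ ((w.length:ℝ))+1 := by
        have hn0 : (0:ℝ) ≤ (w.length:ℝ) := Nat.cast_nonneg _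
        linarith
      calc (1:ℝ) = 1 * 1 := by ring
        _ ≤ M/γ' * ((w.length:ℝ)+1) := mul_le_mul hc1 hn1 one_pos.le (le_of_lt hc0)
    · have := i.isLt
      omega


end Paper
end
end
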